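/- arXiv:2508.21642 — 4 statements merged into one kernel-verified Lean document; each statement's English description precedes it below -/
import Mathlib

section
/- Let t ∈ [0,T], λ ∈ [0,1], p : cl(Ω) → ℝⁿ continuous, and m a Borel measure on cl(Ω) with m(cl(Ω)) ≤ 1. Suppose that for every continuous α : cl(Ω) → ℝⁿ the map x ↦ D_pH(t,x,p(x),(I,α)#m) is continuous, and that there are constants q₀ ∈ [1,∞) and L₁ ∈ (0,1) such that for all (t,x,p), every Borel measure ρ on cl(Ω) with ρ(cl(Ω)) ≤ 1, and all bounded continuous α₁, α₂ : cl(Ω) → ℝⁿ one has |D_pH(t,x,p,(I,α₁)#ρ) − D_pH(t,x,p,(I,α₂)#ρ)| ≤ L₁ ‖α₁ − α₂‖_{L^{q₀}(ρ)}. Then there exists a unique continuous map α : cl(Ω) → ℝⁿ satisfying α(x) = −λ D_pH(t,x,p(x),(I,α)#m) for every x ∈ cl(Ω); consequently μ := (I,α)#m is the unique measure of the form (I,α')#m with α' continuous that satisfies the fixed-point relation μ = (I, −λ D_pH(t,·,p(·),μ))#m. -/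
open Set MeasureTheory Filter
open scoped RealInnerProductSpace ENNReal Topology

noncomputable section

namespace MFG

/-- Euclidean space `ℝⁿ`. -/
abbrev Euc (n : ℕ) := EuclideanSpace ℝ (Fin n)

variable {n : ℕ}

/-- The pushforward `(I,α)#m` of a measure `m` under `x ↦ (x, α x)`. -/
def pushfwd (m : Measure (Euc n)) (α : Euc n → Euc n) : Measure (Euc n × Euc n) :=
  Measure.map (fun x => (x, α x)) m

/-- `Λ_q(μ) = (∫ |α|^q dμ(x,α))^{1/q}`. -/
def LambdaQ (q : ℝ) (μ : Measure (Euc n × Euc n)) : ℝ :=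
  (∫ z, ‖z.2‖ ^ q ∂μ) ^ (1 / q)

/-- `Λ_∞(μ)`: the smallest `R ≥ 0` such that `μ` is supported in `{|α| ≤ R}`. -/
def LambdaInf (μ : Measure (Euc n × Euc n)) : ℝ :=
  sInf {R : ℝ | 0 ≤ R ∧ μ {z : Euc n × Euc n | R < ‖z.2‖} = 0}

/-- `L^q(ρ)` norm of a vector field. -/
def LqNormV (q : ℝ) (ρ : Measure (Euc n)) (f : Euc n → Euc n) : ℝ :=
  (∫ x, ‖f x‖ ^ q ∂ρ) ^ (1 / q)

/-- `L^q(ρ)` norm of a scalar function. -/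
def LqNormR (q : ℝ) (ρ : Measure (Euc n)) (f : Euc n → ℝ) : ℝ :=
  (∫ x, |f x| ^ q ∂ρ) ^ (1 / q)

/-- The bounded-Lipschitz metric `d*` on measures on `cl(Ω) × ℝⁿ`. -/
def dstar (μ ν : Measure (Euc n × Euc n)) : ℝ :=
  sSup {r : ℝ | ∃ φ : Euc n × Euc n → ℝ, LipschitzWith 1 φ ∧ (∀ z, |φ z| ≤ 1) ∧
    r = (∫ z, φ z ∂μ) - ∫ z, φ z ∂ν}

/-- The bounded-Lipschitz metric `d*` on measures on `cl(Ω)`. -/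
def dstarX (μ ν : Measure (Euc n)) : ℝ :=
  sSup {r : ℝ | ∃ φ : Euc n → ℝ, LipschitzWith 1 φ ∧ (∀ z, |φ z| ≤ 1) ∧
    r = (∫ z, φ z ∂μ) - ∫ z, φ z ∂ν}

/-- The measure `f dx` on `Ω` with Lebesgue density `f`. -/
def densMeas (Ω : Set (Euc n)) (f : Euc n → ℝ) : Measure (Euc n) :=
  (volume.restrict Ω).withDensity fun x => ENNReal.ofReal (f x)

/-- `∂_t u`. -/
def pderivT (u : ℝ → Euc n → ℝ) (t : ℝ) (x : Euc n) : ℝ :=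
  deriv (fun s => u s x) t

/-- `D_x u`, the spatial gradient. -/
def spaceGrad (u : ℝ → Euc n → ℝ) (t : ℝ) (x : Euc n) : Euc n :=
  gradient (u t) x

/-- The Laplacian of a function on `ℝⁿ`. -/
def lapl (f : Euc n → ℝ) (x : Euc n) : ℝ :=
  ∑ i : Fin n, fderiv ℝ (fun y => fderiv ℝ f y (EuclideanSpace.single i 1)) x
    (EuclideanSpace.single i 1)

/-- The (spatial) divergence of a vector field on `ℝⁿ`. -/
def divg (F : Euc n → Euc n) (x : Euc n) : ℝ :=
  ∑ i : Fin n, fderiv ℝ (fun y => F y i) x (EuclideanSpace.single i 1)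

/-- `u ∈ C^{1,2}(Q)`: continuous on `Q = [0,T] × cl(Ω)`, once differentiable in time,
twice in space. -/
def C12 (T : ℝ) (Ω : Set (Euc n)) (u : ℝ → Euc n → ℝ) : Prop :=
  ContinuousOn (fun z : ℝ × Euc n => u z.1 z.2) (Icc 0 T ×ˢ closure Ω) ∧
  ∀ t ∈ Icc (0:ℝ) T, ∀ x ∈ closure Ω,
    DifferentiableAt ℝ (fun s => u s x) t ∧ ContDiffAt ℝ 2 (u t) x

/-- `sup_Q v`. -/
def supQ (T : ℝ) (Ω : Set (Euc n)) (v : ℝ → Euc n → ℝ) : ℝ :=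
  sSup ((fun z : ℝ × Euc n => v z.1 z.2) '' (Icc 0 T ×ˢ closure Ω))

/-- `sup_{cl Ω} v`. -/
def supX (Ω : Set (Euc n)) (v : Euc n → ℝ) : ℝ :=
  sSup (v '' closure Ω)

/-- `N` is the outward unit normal vector field on `∂Ω`. -/
def OutwardNormal (Ω : Set (Euc n)) (N : Euc n → Euc n) : Prop :=
  ∀ x ∈ frontier Ω, ‖N x‖ = 1 ∧
    ∀ᶠ s : ℝ in 𝓝[>] (0:ℝ), x + s • N x ∉ closure Ω ∧ x - s • N x ∈ Ω

/-- `Θ_θ(μ)`: pushforward of `μ` under `(x,α) ↦ (x, α/θ)`. -/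
def Theta (θ : ℝ) (μ : Measure (Euc n × Euc n)) : Measure (Euc n × Euc n) :=
  Measure.map (fun z : Euc n × Euc n => (z.1, θ⁻¹ • z.2)) μ

/-- `L^θ(t,x,α,μ) = θ L(t,x,α/θ,Θ_θ(μ))`. -/
def Ltheta (L : ℝ → Euc n → Euc n → Measure (Euc n × Euc n) → ℝ)
    (θ t : ℝ) (x a : Euc n) (μ : Measure (Euc n × Euc n)) : ℝ :=
  θ * L t x (θ⁻¹ • a) (Theta θ μ)

/-- `H^θ`, the Legendre transform of `L^θ` in the velocity variable. -/
def Htheta (L : ℝ → Euc n → Euc n → Measure (Euc n × Euc n) → ℝ)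
    (θ t : ℝ) (x p : Euc n) (μ : Measure (Euc n × Euc n)) : ℝ :=
  ⨆ a : Euc n, (⟪p, a⟫ - Ltheta L θ t x a μ)

/-- Sequential continuity on `[0,T] × cl(Ω) × ℝⁿ × 𝔐_{∞,R}(cl(Ω)×ℝⁿ)` (every `R`),
the measure argument carrying the metric `d*` (scalar-valued version). -/
def MContR (T : ℝ) (Ω : Set (Euc n))
    (F : ℝ → Euc n → Euc n → Measure (Euc n × Euc n) → ℝ) : Prop :=
  ∀ R > (0:ℝ), ∀ (tk : ℕ → ℝ) (xk pk : ℕ → Euc n)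
    (μk : ℕ → Measure (Euc n × Euc n)) (t : ℝ) (x p : Euc n)
    (μ : Measure (Euc n × Euc n)),
    (∀ k, tk k ∈ Icc 0 T) → t ∈ Icc 0 T →
    (∀ k, xk k ∈ closure Ω) → x ∈ closure Ω →
    (∀ k, μk k Set.univ ≤ 1 ∧ μk k {z : Euc n × Euc n | R < ‖z.2‖} = 0) →
    μ Set.univ ≤ 1 → μ {z : Euc n × Euc n | R < ‖z.2‖} = 0 →
    Tendsto tk atTop (𝓝 t) → Tendsto xk atTop (𝓝 x) → Tendsto pk atTop (𝓝 p) →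
    Tendsto (fun k => dstar (μk k) μ) atTop (𝓝 0) →
    Tendsto (fun k => F (tk k) (xk k) (pk k) (μk k)) atTop (𝓝 (F t x p μ))

/-- Sequential continuity (vector-valued version). -/
def MContV (T : ℝ) (Ω : Set (Euc n))
    (F : ℝ → Euc n → Euc n → Measure (Euc n × Euc n) → Euc n) : Prop :=
  ∀ R > (0:ℝ), ∀ (tk : ℕ → ℝ) (xk pk : ℕ → Euc n)
    (μk : ℕ → Measure (Euc n × Euc n)) (t : ℝ) (x p : Euc n)
    (μ : Measure (Euc n × Euc n)),
    (∀ k, tk k ∈ Icc 0 T) → t ∈ Icc 0 T →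
    (∀ k, xk k ∈ closure Ω) → x ∈ closure Ω →
    (∀ k, μk k Set.univ ≤ 1 ∧ μk k {z : Euc n × Euc n | R < ‖z.2‖} = 0) →
    μ Set.univ ≤ 1 → μ {z : Euc n × Euc n | R < ‖z.2‖} = 0 →
    Tendsto tk atTop (𝓝 t) → Tendsto xk atTop (𝓝 x) → Tendsto pk atTop (𝓝 p) →
    Tendsto (fun k => dstar (μk k) μ) atTop (𝓝 0) →
    Tendsto (fun k => F (tk k) (xk k) (pk k) (μk k)) atTop (𝓝 (F t x p μ))

end MFG

open MFG

/-!
The map `α ↦ -λ D_pH(t,·,p(·),(I,α)#m)` preserves continuity on the compact set `cl(Ω)`, and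
since `m` has mass at most `1`, the `L^{q₀}(m)` norm is dominated by the sup norm on `cl(Ω)`;
so the Lipschitz estimate makes it an `L₁`-contraction of `C(cl(Ω), ℝⁿ)`, and Banach's fixed
point theorem gives existence and uniqueness. Two fixed points agree `m`-a.e., so their
pushforwards coincide.
-/

section FixedPoint

variable {X E : Type*} [TopologicalSpace X] [NormedAddCommGroup E] {K : Set X}

theorem continuousOn_extend_val (β : C(K, E)) :
    ContinuousOn (Function.extend Subtype.val β 0) K := by
  rw [continuousOn_iff_continuous_domRestrict]
  convert β.continuous using 1
  funext x
  exact Subtype.val_injective.extend_apply _ _ x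

def restrictOperator (𝒯 : (X → E) → X → E)
    (h𝒯 : ∀ α, ContinuousOn α K → ContinuousOn (𝒯 α) K) (β : C(K, E)) : C(K, E) :=
  ⟨K.domRestrict (𝒯 (Function.extend Subtype.val β 0)),
    (h𝒯 _ (continuousOn_extend_val β)).domRestrict⟩

variable [CompleteSpace E]

theorem exists_unique_continuousOn_fixedPoint (hK : IsCompact K)
    (𝒯 : (X → E) → X → E) (h𝒯 : ∀ α, ContinuousOn α K → ContinuousOn (𝒯 α) K)
    {L : NNReal} (hL : L < 1)
    (hcontr : ∀ α₁ α₂, ContinuousOn α₁ K → ContinuousOn α₂ K → ∀ C, 0 ≤ C →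
      (∀ y ∈ K, ‖α₁ y - α₂ y‖ ≤ C) → ∀ x ∈ K, ‖𝒯 α₁ x - 𝒯 α₂ x‖ ≤ L * C) :
    (∃ α, ContinuousOn α K ∧ EqOn α (𝒯 α) K) ∧
    ∀ α₁ α₂, ContinuousOn α₁ K → ContinuousOn α₂ K →
      EqOn α₁ (𝒯 α₁) K → EqOn α₂ (𝒯 α₂) K → EqOn α₁ α₂ K := by
  have : CompactSpace K := isCompact_iff_compactSpace.mp hK
  set Φ := restrictOperator 𝒯 h𝒯
  have extend_restrict {α : X → E} (x : K) :
      Function.extend Subtype.val (K.domRestrict α) 0 x = α x :=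
    Subtype.val_injective.extend_apply _ _ x
  have hΦ : ContractingWith L Φ := by
    refine ⟨hL, LipschitzWith.of_dist_le_mul fun β₁ β₂ => ?_⟩
    refine (ContinuousMap.dist_le (by positivity)).mpr fun x => ?_
    rw [dist_eq_norm]
    refine hcontr _ _ (continuousOn_extend_val β₁) (continuousOn_extend_val β₂) _ dist_nonneg
      (fun y hy => ?_) x x.2
    rw [← dist_eq_norm, Subtype.val_injective.extend_apply _ _ ⟨y, hy⟩,
      Subtype.val_injective.extend_apply _ _ ⟨y, hy⟩]
    exact ContinuousMap.dist_apply_le_dist _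
  -- `hcontr` with `C = 0` says that `𝒯 α` on `K` only depends on `α` on `K`
  have restrict_eq_fixedPoint {α : X → E} (hα : ContinuousOn α K) (hfix : EqOn α (𝒯 α) K) :
      K.domRestrict α = ContractingWith.fixedPoint Φ hΦ := by
    have hβ : Function.IsFixedPt Φ ⟨K.domRestrict α, hα.domRestrict⟩ := by
      ext x
      have hloc := hcontr _ α (continuousOn_extend_val ⟨K.domRestrict α, hα.domRestrict⟩) hα
        0 le_rfl (fun y hy => by simp [extend_restrict ⟨y, hy⟩]) x x.2
      simpa [Φ, restrictOperator, sub_eq_zero, hfix x.2] using hloc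
    exact congrArg DFunLike.coe (hΦ.fixedPoint_unique hβ)
  refine ⟨⟨Function.extend Subtype.val ⇑(ContractingWith.fixedPoint Φ hΦ) 0,
      continuousOn_extend_val _, fun x hx => ?_⟩,
    fun α₁ α₂ hα₁ hα₂ hfix₁ hfix₂ x hx => ?_⟩
  · rw [Subtype.val_injective.extend_apply _ _ ⟨x, hx⟩]
    conv_lhs => rw [← hΦ.fixedPoint_isFixedPt]
    rfl
  · simpa using congrFun ((restrict_eq_fixedPoint hα₁ hfix₁).trans
      (restrict_eq_fixedPoint hα₂ hfix₂).symm) ⟨x, hx⟩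

end FixedPoint

theorem LqNormV_le_of_ae_norm_le {n : ℕ} {ρ : Measure (Euc n)} (hρ : ρ Set.univ ≤ 1)
    {q : ℝ} (hq : 0 < q) {f : Euc n → Euc n} {C : ℝ} (hC : 0 ≤ C)
    (hf : ∀ᵐ x ∂ρ, ‖f x‖ ≤ C) :
    LqNormV q ρ f ≤ C := by
  have : IsFiniteMeasure ρ := ⟨hρ.trans_lt ENNReal.one_lt_top⟩
  have hpow : ∀ᵐ x ∂ρ, ‖‖f x‖ ^ q‖ ≤ C ^ q := by
    filter_upwards [hf] with x hx
    rw [Real.norm_of_nonneg (by positivity)]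
    exact Real.rpow_le_rpow (norm_nonneg _) hx hq.le
  have hmass : ρ.real Set.univ ≤ 1 := ENNReal.toReal_le_of_le_ofReal zero_le_one (by simpa)
  have hint : ∫ x, ‖f x‖ ^ q ∂ρ ≤ C ^ q :=
    calc ∫ x, ‖f x‖ ^ q ∂ρ ≤ C ^ q * ρ.real Set.univ :=
          (le_abs_self _).trans (norm_integral_le_of_norm_le_const hpow)
      _ ≤ C ^ q := mul_le_of_le_one_right (by positivity) hmass
  calc LqNormV q ρ f ≤ (C ^ q) ^ (1 / q) :=
        Real.rpow_le_rpow (integral_nonneg fun _ => by positivity) hint (by positivity)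
    _ = C := by rw [← Real.rpow_mul hC, mul_one_div_cancel hq.ne', Real.rpow_one]

theorem pushfwd_congr {n : ℕ} {m : Measure (Euc n)} {K : Set (Euc n)} (hm : m Kᶜ = 0)
    {α₁ α₂ : Euc n → Euc n} (h : EqOn α₁ α₂ K) : pushfwd m α₁ = pushfwd m α₂ :=
  Measure.map_congr <| (measure_eq_zero_iff_ae_notMem.mp hm).mono fun x hx => by
    simp [h (not_not.mp hx)]

theorem stmt_0_general
    {n : ℕ}
    (Ω : Set (Euc n)) (hΩb : Bornology.IsBounded Ω)
    (DpH : ℝ → Euc n → Euc n → Measure (Euc n × Euc n) → Euc n)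
    (t : ℝ) (lam : ℝ) (hlam : lam ∈ Icc (0:ℝ) 1)
    (p : Euc n → Euc n)
    (m : Measure (Euc n)) (hm1 : m Set.univ ≤ 1) (hmsupp : m ((closure Ω)ᶜ) = 0)
    -- for every continuous `α`, `x ↦ D_pH(t,x,p(x),(I,α)#m)` is continuous
    (hcont : ∀ α : Euc n → Euc n, ContinuousOn α (closure Ω) →
      ContinuousOn (fun x => DpH t x (p x) (pushfwd m α)) (closure Ω))
    (q₀ L₁ : ℝ) (hq₀ : 1 ≤ q₀) (hL₁ : L₁ ∈ Ioo (0:ℝ) 1)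
    -- contraction estimate in the control variable
    (hLip : ∀ (s : ℝ) (x pp : Euc n) (ρ : Measure (Euc n)),
      ρ Set.univ ≤ 1 → ρ ((closure Ω)ᶜ) = 0 →
      ∀ α₁ α₂ : Euc n → Euc n,
        ContinuousOn α₁ (closure Ω) → ContinuousOn α₂ (closure Ω) →
        (∃ C, ∀ y ∈ closure Ω, ‖α₁ y‖ ≤ C) → (∃ C, ∀ y ∈ closure Ω, ‖α₂ y‖ ≤ C) →
        ‖DpH s x pp (pushfwd ρ α₁) - DpH s x pp (pushfwd ρ α₂)‖ ≤
          L₁ * LqNormV q₀ ρ (fun y => α₁ y - α₂ y)) :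
    -- existence of a continuous fixed point
    (∃ α : Euc n → Euc n, ContinuousOn α (closure Ω) ∧
        ∀ x ∈ closure Ω, α x = -(lam • DpH t x (p x) (pushfwd m α))) ∧
    -- uniqueness of the fixed point, and of the associated measure `μ = (I,α)#m`
    (∀ α₁ α₂ : Euc n → Euc n,
        ContinuousOn α₁ (closure Ω) → ContinuousOn α₂ (closure Ω) →
        (∀ x ∈ closure Ω, α₁ x = -(lam • DpH t x (p x) (pushfwd m α₁))) →
        (∀ x ∈ closure Ω, α₂ x = -(lam • DpH t x (p x) (pushfwd m α₂))) →
        EqOn α₁ α₂ (closure Ω) ∧ pushfwd m α₁ = pushfwd m α₂) := by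
  have hK : IsCompact (closure Ω) := hΩb.isCompact_closure
  have hcontr : ∀ α₁ α₂, ContinuousOn α₁ (closure Ω) → ContinuousOn α₂ (closure Ω) →
      ∀ C, 0 ≤ C → (∀ y ∈ closure Ω, ‖α₁ y - α₂ y‖ ≤ C) → ∀ x ∈ closure Ω,
        ‖-(lam • DpH t x (p x) (pushfwd m α₁)) - -(lam • DpH t x (p x) (pushfwd m α₂))‖ ≤
          L₁ * C := by
    intro α₁ α₂ hα₁ hα₂ C hC hle x _
    have hLq : LqNormV q₀ m (fun y => α₁ y - α₂ y) ≤ C :=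
      LqNormV_le_of_ae_norm_le hm1 (by linarith) hC <|
        (measure_eq_zero_iff_ae_notMem.mp hmsupp).mono fun y hy => hle y (not_not.mp hy)
    have hD := hLip t x (p x) m hm1 hmsupp α₁ α₂ hα₁ hα₂
      (hK.exists_bound_of_continuousOn hα₁) (hK.exists_bound_of_continuousOn hα₂)
    rw [neg_sub_neg, ← smul_sub, norm_smul, Real.norm_of_nonneg hlam.1, ← norm_neg, neg_sub]
    exact (mul_le_of_le_one_left (norm_nonneg _) hlam.2).trans
      (hD.trans (mul_le_mul_of_nonneg_left hLq hL₁.1.le))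
  obtain ⟨hexists, hunique⟩ := exists_unique_continuousOn_fixedPoint hK
    (fun α x => -(lam • DpH t x (p x) (pushfwd m α)))
    (fun α hα => ((hcont α hα).const_smul lam).neg)
    (L := ⟨L₁, hL₁.1.le⟩) hL₁.2 hcontr
  refine ⟨hexists, fun α₁ α₂ hα₁ hα₂ hfix₁ hfix₂ => ?_⟩
  have heq := hunique α₁ α₂ hα₁ hα₂ hfix₁ hfix₂
  exact ⟨heq, pushfwd_congr hmsupp heq⟩

/-- existence and uniqueness of the continuous fixed point
`α(x) = −λ D_pH(t,x,p(x),(I,α)#m)`, and hence of the fixed-point measure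
`μ = (I,−λD_pH(t,·,p(·),μ))#m` among measures of this form. -/
theorem stmt_0
    {n : ℕ} (hn : 1 ≤ n) (T : ℝ) (hT : 0 < T)
    (Ω : Set (Euc n)) (hΩo : IsOpen Ω) (hΩb : Bornology.IsBounded Ω) (hΩne : Ω.Nonempty)
    (DpH : ℝ → Euc n → Euc n → Measure (Euc n × Euc n) → Euc n)
    (t : ℝ) (ht : t ∈ Icc 0 T) (lam : ℝ) (hlam : lam ∈ Icc (0:ℝ) 1)
    (p : Euc n → Euc n) (hp : ContinuousOn p (closure Ω))
    (m : Measure (Euc n)) (hm1 : m Set.univ ≤ 1) (hmsupp : m ((closure Ω)ᶜ) = 0)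
    -- for every continuous `α`, `x ↦ D_pH(t,x,p(x),(I,α)#m)` is continuous
    (hcont : ∀ α : Euc n → Euc n, ContinuousOn α (closure Ω) →
      ContinuousOn (fun x => DpH t x (p x) (pushfwd m α)) (closure Ω))
    (q₀ L₁ : ℝ) (hq₀ : 1 ≤ q₀) (hL₁ : L₁ ∈ Ioo (0:ℝ) 1)
    -- contraction estimate in the control variable
    (hLip : ∀ (s : ℝ) (x pp : Euc n) (ρ : Measure (Euc n)),
      ρ Set.univ ≤ 1 → ρ ((closure Ω)ᶜ) = 0 →
      ∀ α₁ α₂ : Euc n → Euc n,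
        ContinuousOn α₁ (closure Ω) → ContinuousOn α₂ (closure Ω) →
        (∃ C, ∀ y ∈ closure Ω, ‖α₁ y‖ ≤ C) → (∃ C, ∀ y ∈ closure Ω, ‖α₂ y‖ ≤ C) →
        ‖DpH s x pp (pushfwd ρ α₁) - DpH s x pp (pushfwd ρ α₂)‖ ≤
          L₁ * LqNormV q₀ ρ (fun y => α₁ y - α₂ y)) :
    -- existence of a continuous fixed point
    (∃ α : Euc n → Euc n, ContinuousOn α (closure Ω) ∧
        ∀ x ∈ closure Ω, α x = -(lam • DpH t x (p x) (pushfwd m α))) ∧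
    -- uniqueness of the fixed point, and of the associated measure `μ = (I,α)#m`
    (∀ α₁ α₂ : Euc n → Euc n,
        ContinuousOn α₁ (closure Ω) → ContinuousOn α₂ (closure Ω) →
        (∀ x ∈ closure Ω, α₁ x = -(lam • DpH t x (p x) (pushfwd m α₁))) →
        (∀ x ∈ closure Ω, α₂ x = -(lam • DpH t x (p x) (pushfwd m α₂))) →
        EqOn α₁ α₂ (closure Ω) ∧ pushfwd m α₁ = pushfwd m α₂) :=
  stmt_0_general Ω hΩb DpH t lam hlam p m hm1 hmsupp hcont q₀ L₁ hq₀ hL₁ hLip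
end
end

section
/- Let t ∈ [0,T], λ ∈ [0,1], p : cl(Ω) → ℝⁿ continuous and bounded, and m a Borel measure on cl(Ω) with m(cl(Ω)) ≤ 1. Assume there are constants C₀ > 0, q ∈ (1,∞), λ₀ ∈ (0,1), and q₀ ∈ [1, q'] with q' := q/(q−1), such that |D_pH(t,x,p,μ)| ≤ C₀(1 + |p|^{q−1}) + λ₀ Λ_{q₀}(μ) for all (t,x,p,μ). If μ ∈ 𝔐(cl(Ω)×ℝⁿ) satisfies μ = (I, −λ D_pH(t,·,p(·),μ))#m, then for every q̃ ∈ [1,∞], Λ_{q̃}(μ) ≤ (λC₀/(1 − λλ₀)) (1 + ‖ |p|^{q−1} ‖_{L^{max{q₀,q̃}}(m)}); in particular μ is supported in {(x,α) : |α| ≤ R} with R = (C₀/(1−λ₀))(1 + ‖p‖_∞^{q−1}). -/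
open Set MeasureTheory Filter
open scoped RealInnerProductSpace ENNReal Topology

noncomputable section

open MFG

private lemma rpow_int_eq_eLpNorm {n : ℕ} (m : MeasureTheory.Measure (Euc n)) (u : Euc n → ℝ)
    (hu : AEMeasurable u m) (hnn : ∀ x, 0 ≤ u x) {r : ℝ} (hr : 1 ≤ r) :
    (∫ x, u x ^ r ∂m) ^ (1 / r) = (eLpNorm u (ENNReal.ofReal r) m).toReal := by
  have hr0 : (0:ℝ) < r := lt_of_lt_of_le one_pos hr
  have h1 : ∫ x, u x ^ r ∂m = (∫⁻ x, ENNReal.ofReal (u x ^ r) ∂m).toReal :=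
    integral_eq_lintegral_of_nonneg_ae
      (Filter.Eventually.of_forall fun x => Real.rpow_nonneg (hnn x) r)
      (((Real.continuous_rpow_const hr0.le).measurable.comp_aemeasurable
        hu).aestronglyMeasurable)
  have h2 : ∀ x, ENNReal.ofReal (u x ^ r) = (‖u x‖₊ : ℝ≥0∞) ^ r := fun x => by
    rw [← enorm_eq_nnnorm, ← ofReal_norm, Real.norm_of_nonneg (hnn x),
      ENNReal.ofReal_rpow_of_nonneg (hnn x) hr0.le]
  rw [h1]
  simp_rw [h2]
  rw [eLpNorm_eq_lintegral_rpow_enorm_toReal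
      (by simp [ENNReal.ofReal_eq_zero]; linarith : ENNReal.ofReal r ≠ 0)
      ENNReal.ofReal_ne_top, ENNReal.toReal_ofReal hr0.le, ENNReal.toReal_rpow]
  rfl

/-- bounds on `Λ_{q̃}(μ)` for the fixed-point measure
`μ = (I, −λD_pH(t,·,p(·),μ))#m`. -/
theorem stmt_1
    {n : ℕ} (hn : 1 ≤ n) (T : ℝ) (hT : 0 < T)
    (Ω : Set (Euc n)) (hΩo : IsOpen Ω) (hΩb : Bornology.IsBounded Ω) (hΩne : Ω.Nonempty)
    (DpH : ℝ → Euc n → Euc n → Measure (Euc n × Euc n) → Euc n)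
    (t : ℝ) (ht : t ∈ Icc 0 T) (lam : ℝ) (hlam : lam ∈ Icc (0:ℝ) 1)
    (p : Euc n → Euc n) (hp : ContinuousOn p (closure Ω))
    (hpbd : ∃ C, ∀ x ∈ closure Ω, ‖p x‖ ≤ C)
    (m : Measure (Euc n)) (hm1 : m Set.univ ≤ 1) (hmsupp : m ((closure Ω)ᶜ) = 0)
    (C₀ q lam₀ q₀ : ℝ) (hC₀ : 0 < C₀) (hq : 1 < q) (hlam₀ : lam₀ ∈ Ioo (0:ℝ) 1)
    (hq₀ : 1 ≤ q₀) (hq₀' : q₀ ≤ q / (q - 1))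
    -- growth bound on `D_pH`
    (hgrowth : ∀ s ∈ Icc (0:ℝ) T, ∀ x ∈ closure Ω, ∀ (pp : Euc n)
      (μ' : Measure (Euc n × Euc n)), μ' Set.univ ≤ 1 →
      ‖DpH s x pp μ'‖ ≤ C₀ * (1 + ‖pp‖ ^ (q - 1)) + lam₀ * LambdaQ q₀ μ')
    (μ : Measure (Euc n × Euc n)) (hμ1 : μ Set.univ ≤ 1)
    -- the fixed-point relation `μ = (I, −λ D_pH(t,·,p(·),μ))#m`
    (hfix : μ = pushfwd m (fun x => -(lam • DpH t x (p x) μ))) :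
    -- the `Λ_{q̃}` bound for every `q̃ ∈ [1,∞)`
    (∀ qt : ℝ, 1 ≤ qt →
      LambdaQ qt μ ≤ lam * C₀ / (1 - lam * lam₀) *
        (1 + LqNormR (max q₀ qt) m (fun x => ‖p x‖ ^ (q - 1)))) ∧
    -- the `Λ_∞` bound (`q̃ = ∞`, using the `L^∞(m)` norm)
    (LambdaInf μ ≤ lam * C₀ / (1 - lam * lam₀) *
        (1 + (essSup (fun x => ENNReal.ofReal (‖p x‖ ^ (q - 1))) m).toReal)) ∧
    -- in particular `μ` is supported in `{(x,α) : |α| ≤ R}`, `R = (C₀/(1−lam₀))(1+‖p‖_∞^{q−1})`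
    μ {z : Euc n × Euc n |
        C₀ / (1 - lam₀) * (1 + supX Ω (fun x => ‖p x‖) ^ (q - 1)) < ‖z.2‖} = 0 := by
  classical
  obtain ⟨hlam0, hlam1⟩ := hlam
  obtain ⟨hlam₀0, hlam₀1⟩ := hlam₀
  have hq1 : (0:ℝ) ≤ q - 1 := by linarith
  have hden : (0:ℝ) < 1 - lam * lam₀ := by nlinarith
  have hden' : (0:ℝ) < 1 - lam₀ := by linarith
  have hlC : (0:ℝ) ≤ lam * C₀ := mul_nonneg hlam0 hC₀.le
  have hfrac : (0:ℝ) ≤ lam * C₀ / (1 - lam * lam₀) := div_nonneg hlC hden.le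
  have hA0 : 0 ≤ LambdaQ q₀ μ :=
    Real.rpow_nonneg (integral_nonneg fun z => Real.rpow_nonneg (norm_nonneg _) _) _
  have hLqnn : ∀ (r : ℝ) (u : Euc n → ℝ), 0 ≤ LqNormR r m u := fun r u =>
    Real.rpow_nonneg (integral_nonneg fun x => Real.rpow_nonneg (abs_nonneg _) _) _
  set f : Euc n → Euc n := fun x => -(lam • DpH t x (p x) μ) with hf_def
  by_cases hmeas : AEMeasurable (fun x => (x, f x)) m
  swap
  · -- the non-measurable (degenerate) case: `μ = 0`
    have hμ0 : μ = 0 := by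
      rw [hfix]
      exact Measure.map_of_not_aemeasurable hmeas
    refine ⟨?_, ?_, ?_⟩
    · intro qt hqt
      have hz : LambdaQ qt μ = 0 := by
        rw [hμ0]
        simp only [LambdaQ, integral_zero_measure]
        exact Real.zero_rpow (one_div_pos.mpr (lt_of_lt_of_le one_pos hqt)).ne'
      rw [hz]
      exact mul_nonneg hfrac (by linarith [hLqnn (max q₀ qt) (fun x => ‖p x‖ ^ (q - 1))])
    · have hz : LambdaInf μ = 0 := by
        rw [hμ0]
        have hset : {R : ℝ | 0 ≤ R ∧
            (0 : Measure (Euc n × Euc n)) {z : Euc n × Euc n | R < ‖z.2‖} = 0} = Set.Ici 0 := by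
          ext R; simp [Set.mem_Ici]
        simp only [LambdaInf, hset, csInf_Ici]
      rw [hz]
      exact mul_nonneg hfrac (by positivity)
    · rw [hμ0]; simp
  -- main case
  have hfae : AEMeasurable f m := by
    have : Measurable (fun z : Euc n × Euc n => z.2) := measurable_snd
    exact this.comp_aemeasurable hmeas
  have hmem : ∀ᵐ x ∂m, x ∈ closure Ω := by
    rw [ae_iff]
    exact hmsupp
  have hrestrict : m.restrict (closure Ω) = m := Measure.restrict_eq_self_of_ae_mem hmem
  have hpaem : AEMeasurable p m := by
    have := hp.aemeasurable (μ := m) measurableSet_closure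
    rwa [hrestrict] at this
  have hhaem : AEMeasurable (fun x => ‖p x‖ ^ (q - 1)) m :=
    (Real.continuous_rpow_const hq1).measurable.comp_aemeasurable hpaem.norm
  have hhsm : AEStronglyMeasurable (fun x => ‖p x‖ ^ (q - 1)) m := hhaem.aestronglyMeasurable
  have hhnn : ∀ x, (0:ℝ) ≤ ‖p x‖ ^ (q - 1) := fun x => Real.rpow_nonneg (norm_nonneg _) _
  obtain ⟨C, hC⟩ := hpbd
  have hC0 : 0 ≤ C := by
    obtain ⟨x₀, hx₀⟩ := hΩne
    exact le_trans (norm_nonneg _) (hC x₀ (subset_closure hx₀))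
  have hhbd : ∀ᵐ x ∂m, ‖p x‖ ^ (q - 1) ≤ C ^ (q - 1) :=
    hmem.mono fun x hx => Real.rpow_le_rpow (norm_nonneg _) (hC x hx) hq1
  -- a.e. growth bound on `f`
  have hgb : ∀ᵐ x ∂m, ‖f x‖ ≤ lam * C₀ * (1 + ‖p x‖ ^ (q - 1)) + lam * lam₀ * LambdaQ q₀ μ := by
    filter_upwards [hmem] with x hx
    have h1 := hgrowth t ht x hx (p x) μ hμ1
    have h2 : ‖f x‖ = lam * ‖DpH t x (p x) μ‖ := by
      simp only [hf_def, norm_neg, norm_smul, Real.norm_of_nonneg hlam0]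
    rw [h2]
    calc lam * ‖DpH t x (p x) μ‖
        ≤ lam * (C₀ * (1 + ‖p x‖ ^ (q - 1)) + lam₀ * LambdaQ q₀ μ) :=
          mul_le_mul_of_nonneg_left h1 hlam0
      _ = lam * C₀ * (1 + ‖p x‖ ^ (q - 1)) + lam * lam₀ * LambdaQ q₀ μ := by ring
  -- generic `eLpNorm` bound from an a.e. bound
  have hbd : ∀ (u : Euc n → ℝ) (c r : ℝ), 1 ≤ r → (∀ᵐ x ∂m, ‖u x‖ ≤ c) →
      eLpNorm u (ENNReal.ofReal r) m ≤ ENNReal.ofReal c := by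
    intro u c r hr hub
    refine le_trans (eLpNorm_le_of_ae_bound hub) ?_
    calc m Set.univ ^ (ENNReal.ofReal r).toReal⁻¹ * ENNReal.ofReal c
        ≤ 1 * ENNReal.ofReal c :=
          mul_le_mul_left (ENNReal.rpow_le_one hm1 (inv_nonneg.mpr ENNReal.toReal_nonneg)) _
      _ = ENNReal.ofReal c := one_mul _
  have hNfin : ∀ r : ℝ, 1 ≤ r → eLpNorm (fun x => ‖p x‖ ^ (q - 1)) (ENNReal.ofReal r) m ≠ ⊤ := by
    intro r hr
    refine ne_top_of_le_ne_top ENNReal.ofReal_ne_top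
      (hbd _ (C ^ (q - 1)) r hr (hhbd.mono fun x hx => ?_))
    rwa [Real.norm_of_nonneg (hhnn x)]
  -- representation of `LambdaQ r μ`
  have hrep : ∀ r : ℝ, 1 ≤ r →
      LambdaQ r μ = (eLpNorm f (ENNReal.ofReal r) m).toReal := by
    intro r hr
    have hsm : AEStronglyMeasurable (fun z : Euc n × Euc n => ‖z.2‖ ^ r)
        (Measure.map (fun x => (x, f x)) m) :=
      (Continuous.aestronglyMeasurable
        (continuous_snd.norm.rpow_const fun z => Or.inr (le_trans zero_le_one hr)))
    have hmap : ∫ z, ‖z.2‖ ^ r ∂μ = ∫ x, ‖f x‖ ^ r ∂m := by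
      rw [hfix]
      simp only [pushfwd]
      rw [integral_map hmeas hsm]
    simp only [LambdaQ, hmap]
    rw [rpow_int_eq_eLpNorm m (fun x => ‖f x‖) hfae.norm (fun x => norm_nonneg _) hr,
      eLpNorm_norm]
  -- representation of `LqNormR`
  have hrepN : ∀ r : ℝ, 1 ≤ r →
      LqNormR r m (fun x => ‖p x‖ ^ (q - 1)) =
        (eLpNorm (fun x => ‖p x‖ ^ (q - 1)) (ENNReal.ofReal r) m).toReal := by
    intro r hr
    have e : ∀ x : Euc n, |‖p x‖ ^ (q - 1)| ^ r = (‖p x‖ ^ (q - 1)) ^ r := fun x => by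
      rw [abs_of_nonneg (hhnn x)]
    simp only [LqNormR, e]
    exact rpow_int_eq_eLpNorm m _ hhaem hhnn hr
  -- key estimate, `eLpNorm` level then real level
  have keyR : ∀ r : ℝ, 1 ≤ r →
      (eLpNorm f (ENNReal.ofReal r) m).toReal ≤
        lam * C₀ * (1 + (eLpNorm (fun x => ‖p x‖ ^ (q - 1)) (ENNReal.ofReal r) m).toReal)
          + lam * lam₀ * LambdaQ q₀ μ := by
    intro r hr
    set er := ENNReal.ofReal r with her_def
    have her : (1:ℝ≥0∞) ≤ er := ENNReal.one_le_ofReal.mpr hr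
    set N := eLpNorm (fun x => ‖p x‖ ^ (q - 1)) er m with hN_def
    have hsm1 : AEStronglyMeasurable (fun _ : Euc n => lam * C₀) m := aestronglyMeasurable_const
    have hsm2 : AEStronglyMeasurable (fun x => lam * C₀ * ‖p x‖ ^ (q - 1)) m :=
      (hhaem.const_mul _).aestronglyMeasurable
    have t0 : eLpNorm f er m ≤
        eLpNorm (fun x => (lam * C₀ + lam * C₀ * ‖p x‖ ^ (q - 1)) + lam * lam₀ * LambdaQ q₀ μ)
          er m := by
      refine eLpNorm_mono_ae (hgb.mono fun x hx => ?_)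
      rw [Real.norm_eq_abs]
      exact hx.trans ((le_of_eq (by ring)).trans (le_abs_self _))
    have t1 : eLpNorm (fun x => (lam * C₀ + lam * C₀ * ‖p x‖ ^ (q - 1))
          + lam * lam₀ * LambdaQ q₀ μ) er m ≤
        eLpNorm (fun x => lam * C₀ + lam * C₀ * ‖p x‖ ^ (q - 1)) er m
          + eLpNorm (fun _ : Euc n => lam * lam₀ * LambdaQ q₀ μ) er m :=
      eLpNorm_add_le (hsm1.add hsm2) aestronglyMeasurable_const her
    have t2 : eLpNorm (fun x => lam * C₀ + lam * C₀ * ‖p x‖ ^ (q - 1)) er m ≤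
        eLpNorm (fun _ : Euc n => lam * C₀) er m
          + eLpNorm (fun x => lam * C₀ * ‖p x‖ ^ (q - 1)) er m :=
      eLpNorm_add_le hsm1 hsm2 her
    have t3 : eLpNorm (fun x => lam * C₀ * ‖p x‖ ^ (q - 1)) er m ≤
        ENNReal.ofReal (lam * C₀) * N := by
      rw [show (fun x => lam * C₀ * ‖p x‖ ^ (q - 1))
          = (lam * C₀) • (fun x => ‖p x‖ ^ (q - 1)) from rfl]
      refine le_trans eLpNorm_const_smul_le ?_
      rw [← ofReal_norm,
        Real.norm_of_nonneg hlC]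
    have t4 : eLpNorm (fun _ : Euc n => lam * C₀) er m ≤ ENNReal.ofReal (lam * C₀) :=
      hbd _ _ r hr (Filter.Eventually.of_forall fun x => le_of_eq (Real.norm_of_nonneg hlC))
    have hconst3 : (0:ℝ) ≤ lam * lam₀ * LambdaQ q₀ μ :=
      mul_nonneg (mul_nonneg hlam0 hlam₀0.le) hA0
    have t5 : eLpNorm (fun _ : Euc n => lam * lam₀ * LambdaQ q₀ μ) er m ≤
        ENNReal.ofReal (lam * lam₀ * LambdaQ q₀ μ) :=
      hbd _ _ r hr (Filter.Eventually.of_forall fun x => le_of_eq (Real.norm_of_nonneg hconst3))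
    have total : eLpNorm f er m ≤
        ENNReal.ofReal (lam * C₀) + ENNReal.ofReal (lam * C₀) * N
          + ENNReal.ofReal (lam * lam₀ * LambdaQ q₀ μ) :=
      t0.trans (t1.trans (add_le_add (t2.trans (add_le_add t4 t3)) t5))
    have hNne : N ≠ ⊤ := hNfin r hr
    have hmulne : ENNReal.ofReal (lam * C₀) * N ≠ ⊤ :=
      ENNReal.mul_ne_top ENNReal.ofReal_ne_top hNne
    have hsumne : ENNReal.ofReal (lam * C₀) + ENNReal.ofReal (lam * C₀) * N ≠ ⊤ :=
      ENNReal.add_ne_top.mpr ⟨ENNReal.ofReal_ne_top, hmulne⟩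
    have htr := ENNReal.toReal_mono
      (ENNReal.add_ne_top.mpr ⟨hsumne, ENNReal.ofReal_ne_top⟩) total
    rw [ENNReal.toReal_add hsumne ENNReal.ofReal_ne_top,
      ENNReal.toReal_add ENNReal.ofReal_ne_top hmulne, ENNReal.toReal_mul,
      ENNReal.toReal_ofReal hlC, ENNReal.toReal_ofReal hconst3] at htr
    exact htr.trans (le_of_eq (by ring))
  -- monotonicity of the `eLpNorm` of `h` in the exponent
  have hNmono : ∀ r r' : ℝ, 1 ≤ r → r ≤ r' →
      (eLpNorm (fun x => ‖p x‖ ^ (q - 1)) (ENNReal.ofReal r) m).toReal ≤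
        (eLpNorm (fun x => ‖p x‖ ^ (q - 1)) (ENNReal.ofReal r') m).toReal := by
    intro r r' hr hrr
    have hr0 : (0:ℝ) < r := lt_of_lt_of_le one_pos hr
    have hr'0 : (0:ℝ) < r' := lt_of_lt_of_le hr0 hrr
    refine ENNReal.toReal_mono (hNfin r' (hr.trans hrr)) ?_
    refine le_trans (eLpNorm_le_eLpNorm_mul_rpow_measure_univ
      (ENNReal.ofReal_le_ofReal hrr) hhsm) ?_
    have hexp : (0:ℝ) ≤ 1 / (ENNReal.ofReal r).toReal - 1 / (ENNReal.ofReal r').toReal := by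
      rw [ENNReal.toReal_ofReal hr0.le, ENNReal.toReal_ofReal hr'0.le]
      have := one_div_le_one_div_of_le hr0 hrr
      linarith
    calc eLpNorm (fun x => ‖p x‖ ^ (q - 1)) (ENNReal.ofReal r') m
          * m Set.univ ^ (1 / (ENNReal.ofReal r).toReal - 1 / (ENNReal.ofReal r').toReal)
        ≤ eLpNorm (fun x => ‖p x‖ ^ (q - 1)) (ENNReal.ofReal r') m * 1 :=
          mul_le_mul_right (ENNReal.rpow_le_one hm1 hexp) _
      _ = _ := mul_one _
  -- toReal-level bound from a pointwise a.e. bound on `h`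
  have hNle : ∀ c r : ℝ, 0 ≤ c → 1 ≤ r → (∀ᵐ x ∂m, ‖p x‖ ^ (q - 1) ≤ c) →
      (eLpNorm (fun x => ‖p x‖ ^ (q - 1)) (ENNReal.ofReal r) m).toReal ≤ c := by
    intro c r hc0 hr hc
    refine ENNReal.toReal_le_of_le_ofReal hc0 (hbd _ c r hr (hc.mono fun x hx => ?_))
    rwa [Real.norm_of_nonneg (hhnn x)]
  -- self-improving bound on `A = LambdaQ q₀ μ`
  have hA_base : LambdaQ q₀ μ ≤ lam * C₀ / (1 - lam * lam₀) *
      (1 + (eLpNorm (fun x => ‖p x‖ ^ (q - 1)) (ENNReal.ofReal q₀) m).toReal) := by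
    have h1 := keyR q₀ hq₀
    rw [← hrep q₀ hq₀] at h1
    set Nq := (eLpNorm (fun x => ‖p x‖ ^ (q - 1)) (ENNReal.ofReal q₀) m).toReal
    rw [div_mul_eq_mul_div, le_div_iff₀ hden]
    nlinarith [h1]
  -- the chain inequality
  have hchain : ∀ B : ℝ, 0 ≤ B →
      LambdaQ q₀ μ ≤ lam * C₀ / (1 - lam * lam₀) * (1 + B) →
      lam * C₀ * (1 + B) + lam * lam₀ * LambdaQ q₀ μ ≤
        lam * C₀ / (1 - lam * lam₀) * (1 + B) := by
    intro B hB hA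
    rw [div_mul_eq_mul_div, le_div_iff₀ hden] at hA ⊢
    have h2 : lam * lam₀ * (LambdaQ q₀ μ * (1 - lam * lam₀)) ≤
        lam * lam₀ * (lam * C₀ * (1 + B)) :=
      mul_le_mul_of_nonneg_left hA (mul_nonneg hlam0 hlam₀0.le)
    nlinarith [h2]
  -- `μ {R < ‖z.2‖} = 0` from an a.e. bound on `f`
  have hzero : ∀ R : ℝ, (∀ᵐ x ∂m, ‖f x‖ ≤ R) →
      μ {z : Euc n × Euc n | R < ‖z.2‖} = 0 := by
    intro R hR
    have hsetM : MeasurableSet {z : Euc n × Euc n | R < ‖z.2‖} :=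
      measurableSet_lt measurable_const measurable_snd.norm
    rw [hfix]
    simp only [pushfwd]
    rw [Measure.map_apply_of_aemeasurable hmeas hsetM]
    have h0 := ae_iff.mp hR
    simp only [not_le] at h0
    exact h0
  refine ⟨?_, ?_, ?_⟩
  · -- conclusion 1
    intro qt hqt
    have hqt' : 1 ≤ max q₀ qt := le_trans hq₀ (le_max_left _ _)
    set Nm := (eLpNorm (fun x => ‖p x‖ ^ (q - 1)) (ENNReal.ofReal (max q₀ qt)) m).toReal with hNm
    have hmax1 : (eLpNorm (fun x => ‖p x‖ ^ (q - 1)) (ENNReal.ofReal qt) m).toReal ≤ Nm :=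
      hNmono qt (max q₀ qt) hqt (le_max_right _ _)
    have hmax2 : (eLpNorm (fun x => ‖p x‖ ^ (q - 1)) (ENNReal.ofReal q₀) m).toReal ≤ Nm :=
      hNmono q₀ (max q₀ qt) hq₀ (le_max_left _ _)
    have hNnn : (0:ℝ) ≤ Nm := ENNReal.toReal_nonneg
    have hA2 : LambdaQ q₀ μ ≤ lam * C₀ / (1 - lam * lam₀) * (1 + Nm) :=
      hA_base.trans (mul_le_mul_of_nonneg_left (by linarith) hfrac)
    rw [hrep qt hqt, hrepN (max q₀ qt) hqt', ← hNm]
    calc (eLpNorm f (ENNReal.ofReal qt) m).toReal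
        ≤ lam * C₀ * (1 + (eLpNorm (fun x => ‖p x‖ ^ (q - 1))
            (ENNReal.ofReal qt) m).toReal) + lam * lam₀ * LambdaQ q₀ μ := keyR qt hqt
      _ ≤ lam * C₀ * (1 + Nm) + lam * lam₀ * LambdaQ q₀ μ := by
          have := mul_le_mul_of_nonneg_left (by linarith : 1 +
            (eLpNorm (fun x => ‖p x‖ ^ (q - 1)) (ENNReal.ofReal qt) m).toReal ≤ 1 + Nm) hlC
          linarith
      _ ≤ lam * C₀ / (1 - lam * lam₀) * (1 + Nm) := hchain Nm hNnn hA2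
  · -- conclusion 2: the `Λ_∞` bound
    set E := (essSup (fun x => ENNReal.ofReal (‖p x‖ ^ (q - 1))) m).toReal with hE_def
    have hEfin : essSup (fun x => ENNReal.ofReal (‖p x‖ ^ (q - 1))) m ≤
        ENNReal.ofReal (C ^ (q - 1)) :=
      essSup_le_of_ae_le _ (hhbd.mono fun x hx => ENNReal.ofReal_le_ofReal hx)
    have hEne : essSup (fun x => ENNReal.ofReal (‖p x‖ ^ (q - 1))) m ≠ ⊤ :=
      ne_top_of_le_ne_top ENNReal.ofReal_ne_top hEfin
    have haeE : ∀ᵐ x ∂m, ‖p x‖ ^ (q - 1) ≤ E := by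
      filter_upwards [ENNReal.ae_le_essSup (fun x => ENNReal.ofReal (‖p x‖ ^ (q - 1)))] with x hx
      have := ENNReal.toReal_mono hEne hx
      rwa [ENNReal.toReal_ofReal (hhnn x)] at this
    have hE0 : 0 ≤ E := ENNReal.toReal_nonneg
    have hA3 : LambdaQ q₀ μ ≤ lam * C₀ / (1 - lam * lam₀) * (1 + E) :=
      hA_base.trans (mul_le_mul_of_nonneg_left
        (by linarith [hNle E q₀ hE0 hq₀ haeE]) hfrac)
    have haef : ∀ᵐ x ∂m, ‖f x‖ ≤ lam * C₀ / (1 - lam * lam₀) * (1 + E) := by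
      filter_upwards [hgb, haeE] with x h1 h2
      calc ‖f x‖ ≤ lam * C₀ * (1 + ‖p x‖ ^ (q - 1)) + lam * lam₀ * LambdaQ q₀ μ := h1
        _ ≤ lam * C₀ * (1 + E) + lam * lam₀ * LambdaQ q₀ μ := by
            have := mul_le_mul_of_nonneg_left
              (by linarith : 1 + ‖p x‖ ^ (q - 1) ≤ 1 + E) hlC
            linarith
        _ ≤ lam * C₀ / (1 - lam * lam₀) * (1 + E) := hchain E hE0 hA3
    have hz := hzero _ haef
    have hRnn : 0 ≤ lam * C₀ / (1 - lam * lam₀) * (1 + E) :=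
      mul_nonneg hfrac (by linarith)
    simp only [LambdaInf]
    exact csInf_le ⟨0, fun y hy => hy.1⟩ ⟨hRnn, hz⟩
  · -- conclusion 3: support bound
    have hSb : ∀ x ∈ closure Ω, ‖p x‖ ≤ supX Ω (fun x => ‖p x‖) := by
      intro x hx
      simp only [supX]
      refine le_csSup ⟨C, ?_⟩ (Set.mem_image_of_mem _ hx)
      rintro y ⟨z, hz, rfl⟩
      exact hC z hz
    set S := supX Ω (fun x => ‖p x‖) with hS_def
    have hS0 : 0 ≤ S := by
      obtain ⟨x₀, hx₀⟩ := hΩne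
      exact le_trans (norm_nonneg (p x₀)) (hSb x₀ (subset_closure hx₀))
    have hSq0 : (0:ℝ) ≤ S ^ (q - 1) := Real.rpow_nonneg hS0 _
    have haeS : ∀ᵐ x ∂m, ‖p x‖ ^ (q - 1) ≤ S ^ (q - 1) :=
      hmem.mono fun x hx => Real.rpow_le_rpow (norm_nonneg _) (hSb x hx) hq1
    have hA4 : LambdaQ q₀ μ ≤ lam * C₀ / (1 - lam * lam₀) * (1 + S ^ (q - 1)) :=
      hA_base.trans (mul_le_mul_of_nonneg_left
        (by linarith [hNle (S ^ (q - 1)) q₀ hSq0 hq₀ haeS]) hfrac)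
    have hdivle : lam * C₀ / (1 - lam * lam₀) ≤ C₀ / (1 - lam₀) := by
      rw [div_le_div_iff₀ hden hden']
      nlinarith [mul_nonneg (mul_nonneg hlam₀0.le hC₀.le) (sub_nonneg.mpr hlam1),
        mul_le_of_le_one_left hC₀.le hlam1]
    have haef : ∀ᵐ x ∂m, ‖f x‖ ≤ C₀ / (1 - lam₀) * (1 + S ^ (q - 1)) := by
      filter_upwards [hgb, haeS] with x h1 h2
      have step1 : ‖f x‖ ≤ lam * C₀ / (1 - lam * lam₀) * (1 + S ^ (q - 1)) := by
        calc ‖f x‖ ≤ lam * C₀ * (1 + ‖p x‖ ^ (q - 1)) + lam * lam₀ * LambdaQ q₀ μ := h1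
          _ ≤ lam * C₀ * (1 + S ^ (q - 1)) + lam * lam₀ * LambdaQ q₀ μ := by
              have := mul_le_mul_of_nonneg_left
                (by linarith : 1 + ‖p x‖ ^ (q - 1) ≤ 1 + S ^ (q - 1)) hlC
              linarith
          _ ≤ lam * C₀ / (1 - lam * lam₀) * (1 + S ^ (q - 1)) :=
              hchain (S ^ (q - 1)) hSq0 hA4
      exact step1.trans (mul_le_mul_of_nonneg_right hdivle (by linarith))
    exact hzero _ haef
end
end

section
/- Assume D_pH : [0,T]×cl(Ω)×ℝⁿ×𝔐(cl(Ω)×ℝⁿ) → ℝⁿ is continuous, where 𝔐_{∞,R}(cl(Ω)×ℝⁿ) carries the metric d* for each R > 0, and satisfies: (i) the contraction property |D_pH(t,x,p,(I,α₁)#ρ) − D_pH(t,x,p,(I,α₂)#ρ)| ≤ L₁‖α₁−α₂‖_{L^{q₀}(ρ)} for some L₁ ∈ (0,1), q₀ ∈ [1,∞), all subprobability measures ρ on cl(Ω) and bounded continuous α₁,α₂; (ii) the growth bound |D_pH(t,x,p,μ)| ≤ C₀(1+|p|^{q−1}) + λ₀Λ_{q₀}(μ) with C₀ > 0, q ∈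 (1,∞), λ₀ ∈ (0,1). Let (t_k, λ_k, p_k, m_k) be a sequence in [0,T]×[0,1]×C⁰(cl(Ω);ℝⁿ)×L¹(Ω) with t_k → t, λ_k → λ, p_k → p uniformly, m_k ≥ 0, ‖m_k‖_{L¹(Ω)} ≤ 1, and m_k → m in L¹(Ω). Let μ^k and μ be the unique fixed points μ^k = (I, −λ_k D_pH(t_k,·,p_k(·),μ^k))#(m_k dx) and μ = (I, −λ D_pH(t,·,p(·),μ))#(m dx). Then d*(μ^k, μ) → 0. -/
open Set MeasureTheory Filter
open scoped RealInnerProductSpace ENNReal Topology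

noncomputable section

open MFG

/-!
Let `α = -λ D_pH(t, ·, p, μ)` be the limit feedback field and `χ_k = (I, α)#(m_k dx)`. Since
`χ_k` and `μ` are pushed forward by the same field, `d*(χ_k, μ) ≤ ‖m_k - m‖_{L¹}`. By the
continuity of `D_pH` and compactness of `cl Ω`, the fields `-λ_k D_pH(t_k, ·, p_k, χ_k)`
converge to `α` uniformly, say within `ε_k`. Comparing with the fixed-point field `α_k` of
`μ^k`, the contraction property gives `|α_k - α| ≤ ε_k + L₁ ‖α_k - α‖_{L^{q₀}(m_k)}`, and since
`L₁ < 1` this absorbs into `sup |α_k - α| ≤ ε_k / (1 - L₁)`, a bound on `d*(μ^k, χ_k)`.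
The same absorption applied to the growth bound (with `λ₀ < 1`) puts every fixed point in some
`𝔐_{∞,R}`, where the continuity of `D_pH` is available.
-/

namespace MFG

variable {n : ℕ}

theorem integral_le_of_ae_le_of_measure_univ_le_one {X : Type*} [MeasurableSpace X]
    {μ : Measure X} (hμ : μ Set.univ ≤ 1) {f : X → ℝ} {c : ℝ} (hc : 0 ≤ c)
    (hf : ∀ᵐ x ∂μ, f x ≤ c) : ∫ x, f x ∂μ ≤ c := by
  have : IsFiniteMeasure μ := ⟨hμ.trans_lt ENNReal.one_lt_top⟩
  by_cases hint : Integrable f μ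
  · calc ∫ x, f x ∂μ ≤ ∫ _, c ∂μ := integral_mono_ae hint (integrable_const c) hf
      _ = μ.real Set.univ * c := integral_const c
      _ ≤ c := mul_le_of_le_one_left hc
          (ENNReal.toReal_le_of_le_ofReal zero_le_one (by simpa using hμ))
  · rw [integral_undef hint]
    exact hc

theorem integral_le_of_tendsto_integral_abs_sub {X : Type*} [MeasurableSpace X]
    {μ : Measure X} {f : ℕ → X → ℝ} {g : X → ℝ} {c : ℝ} (hf : ∀ k, Integrable (f k) μ)
    (hg : Integrable g μ) (hc : ∀ k, ∫ x, f k x ∂μ ≤ c)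
    (hfg : Tendsto (fun k => ∫ x, |f k x - g x| ∂μ) atTop (𝓝 0)) : ∫ x, g x ∂μ ≤ c := by
  have hlim : Tendsto (fun k => ∫ x, f k x ∂μ) atTop (𝓝 (∫ x, g x ∂μ)) := by
    rw [tendsto_iff_norm_sub_tendsto_zero]
    refine squeeze_zero (fun _ => norm_nonneg _) (fun k => ?_) hfg
    rw [← integral_sub (hf k) hg]
    exact abs_integral_le_integral_abs
  exact le_of_tendsto' hlim hc

theorem tendstoUniformlyOn_of_seq_tendsto {α β : Type*} [TopologicalSpace α]
    [FirstCountableTopology α] [UniformSpace β] {K : Set α} (hK : IsCompact K)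
    {F : ℕ → α → β} {f : α → β} (hf : ContinuousOn f K)
    (h : ∀ (k : ℕ → ℕ) (x : ℕ → α), ∀ a ∈ K, Tendsto k atTop atTop → (∀ j, x j ∈ K) →
      Tendsto x atTop (𝓝 a) → Tendsto (fun j => F (k j) (x j)) atTop (𝓝 (f a))) :
    TendstoUniformlyOn F f atTop K := by
  have := isCompact_iff_compactSpace.mp hK
  rw [tendstoUniformlyOn_iff_tendstoUniformly_comp_coe,
    ← tendstoLocallyUniformly_iff_tendstoUniformly_of_compactSpace,
    tendstoLocallyUniformly_iff_forall_tendsto]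
  intro a
  refine Tendsto.mono_right ?_ (nhds_le_uniformity (f a))
  refine (hf.domRestrict.continuousAt.tendsto.comp tendsto_snd).prodMk_nhds ?_
  refine tendsto_iff_seq_tendsto.2 fun u hu => ?_
  exact h (fun j => (u j).1) (fun j => (u j).2) a a.2 (tendsto_fst.comp hu) (fun j => (u j).2.2)
    ((continuous_subtype_val.tendsto a).comp (tendsto_snd.comp hu))

section Dstar

variable {μ ν χ : Measure (Euc n × Euc n)}

theorem dstar_le {a : ℝ} (ha : 0 ≤ a)
    (h : ∀ φ : Euc n × Euc n → ℝ, LipschitzWith 1 φ → (∀ z, |φ z| ≤ 1) →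
      (∫ z, φ z ∂μ) - ∫ z, φ z ∂ν ≤ a) : dstar μ ν ≤ a :=
  Real.sSup_le (by rintro r ⟨φ, h1, h2, rfl⟩; exact h φ h1 h2) ha

theorem integral_sub_le_dstar (hμ : μ Set.univ ≤ 1) (hν : ν Set.univ ≤ 1)
    {φ : Euc n × Euc n → ℝ} (hφ : LipschitzWith 1 φ) (hφ1 : ∀ z, |φ z| ≤ 1) :
    (∫ z, φ z ∂μ) - ∫ z, φ z ∂ν ≤ dstar μ ν := by
  refine le_csSup ⟨2, ?_⟩ ⟨φ, hφ, hφ1, rfl⟩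
  rintro r ⟨ψ, -, hψ1, rfl⟩
  have h1 := integral_le_of_ae_le_of_measure_univ_le_one hμ zero_le_one
    (.of_forall fun z => (abs_le.1 (hψ1 z)).2)
  have h2 := integral_le_of_ae_le_of_measure_univ_le_one hν zero_le_one
    (.of_forall fun z => neg_le.2 (abs_le.1 (hψ1 z)).1)
  rw [integral_neg] at h2
  linarith

theorem dstar_nonneg (hμ : μ Set.univ ≤ 1) (hν : ν Set.univ ≤ 1) : 0 ≤ dstar μ ν := by
  simpa using integral_sub_le_dstar hμ hν (φ := 0)
    ((LipschitzWith.const 0).weaken zero_le_one) (by simp)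

theorem dstar_self (hμ : μ Set.univ ≤ 1) : dstar μ μ = 0 :=
  le_antisymm (dstar_le le_rfl fun _ _ _ => (sub_self _).le) (dstar_nonneg hμ hμ)

theorem dstar_triangle (hμ : μ Set.univ ≤ 1) (hν : ν Set.univ ≤ 1) (hχ : χ Set.univ ≤ 1) :
    dstar μ ν ≤ dstar μ χ + dstar χ ν :=
  dstar_le (add_nonneg (dstar_nonneg hμ hχ) (dstar_nonneg hχ hν)) fun _ hφ hφ1 => by
    have := integral_sub_le_dstar hμ hχ hφ hφ1
    have := integral_sub_le_dstar hχ hν hφ hφ1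
    linarith

end Dstar

section Pushforward

variable {ρ : Measure (Euc n)} {α : Euc n → Euc n}

-- No measurability hypotheses: `Measure.map` along a map that is not a.e.-measurable is `0`.
theorem pushfwd_univ_le : pushfwd ρ α Set.univ ≤ ρ Set.univ := by
  by_cases h : AEMeasurable (fun x => (x, α x)) ρ
  · rw [pushfwd, Measure.map_apply_of_aemeasurable h MeasurableSet.univ, preimage_univ]
  · simp [pushfwd, Measure.map_of_not_aemeasurable h]

theorem pushfwd_norm_snd_gt {R : ℝ} (hα : ∀ᵐ x ∂ρ, ‖α x‖ ≤ R) :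
    pushfwd ρ α {z | R < ‖z.2‖} = 0 := by
  by_cases h : AEMeasurable (fun x => (x, α x)) ρ
  · rw [pushfwd, Measure.map_apply_of_aemeasurable h
      (measurableSet_lt measurable_const measurable_snd.norm)]
    exact measure_eq_zero_iff_ae_notMem.2 (hα.mono fun x hx => not_lt.2 hx)
  · simp [pushfwd, Measure.map_of_not_aemeasurable h]

theorem integral_pushfwd (hα : AEMeasurable α ρ) {φ : Euc n × Euc n → ℝ} (hφ : Continuous φ) :
    ∫ z, φ z ∂pushfwd ρ α = ∫ x, φ (x, α x) ∂ρ :=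
  integral_map (aemeasurable_id.prodMk hα) hφ.aestronglyMeasurable

theorem LqNormV_nonneg {q : ℝ} {f : Euc n → Euc n} : 0 ≤ LqNormV q ρ f :=
  Real.rpow_nonneg (integral_nonneg fun _ => Real.rpow_nonneg (norm_nonneg _) _) _

theorem LqNormV_le (hρ : ρ Set.univ ≤ 1) {f : Euc n → Euc n} {c q : ℝ} (hc : 0 ≤ c)
    (hq : 0 < q) (hf : ∀ᵐ x ∂ρ, ‖f x‖ ≤ c) : LqNormV q ρ f ≤ c := by
  have hI : ∫ x, ‖f x‖ ^ q ∂ρ ≤ c ^ q :=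
    integral_le_of_ae_le_of_measure_univ_le_one hρ (by positivity)
      (hf.mono fun x hx => Real.rpow_le_rpow (norm_nonneg _) hx hq.le)
  calc LqNormV q ρ f ≤ (c ^ q) ^ (1 / q) :=
        Real.rpow_le_rpow (integral_nonneg fun _ => by positivity) hI (by positivity)
    _ = c := by rw [one_div, Real.rpow_rpow_inv hc hq.ne']

theorem LambdaQ_pushfwd_le {q : ℝ} (hq : 0 < q) : LambdaQ q (pushfwd ρ α) ≤ LqNormV q ρ α := by
  by_cases h : AEMeasurable α ρ
  · rw [LambdaQ, integral_pushfwd h (continuous_snd.norm.rpow_const fun _ => Or.inr hq.le)]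
    rfl
  · have h' : ¬AEMeasurable (fun x => (x, α x)) ρ := fun h' =>
      h (measurable_snd.comp_aemeasurable h')
    simp only [LambdaQ, pushfwd, Measure.map_of_not_aemeasurable h', integral_zero_measure]
    rw [Real.zero_rpow (one_div_pos.2 hq).ne']
    exact LqNormV_nonneg

theorem norm_le_div_of_norm_le_add_LqNormV (hρ : ρ Set.univ ≤ 1) {K : Set (Euc n)}
    (hρK : ∀ᵐ x ∂ρ, x ∈ K) {f : Euc n → Euc n} {a L q : ℝ} (ha : 0 ≤ a) (hL : L ∈ Ico 0 1)
    (hq : 0 < q) (hf : ∀ x ∈ K, ‖f x‖ ≤ a + L * LqNormV q ρ f) :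
    ∀ x ∈ K, ‖f x‖ ≤ a / (1 - L) := by
  have hN0 : 0 ≤ LqNormV q ρ f := LqNormV_nonneg
  have hL0 := hL.1
  have hL1 : 0 < 1 - L := sub_pos.2 hL.2
  have hN : LqNormV q ρ f ≤ a + L * LqNormV q ρ f :=
    LqNormV_le hρ (by positivity) hq (hρK.mono hf)
  have hN' : LqNormV q ρ f ≤ a / (1 - L) := by
    rw [le_div_iff₀ hL1]
    linarith
  intro x hx
  calc ‖f x‖ ≤ a + L * LqNormV q ρ f := hf x hx
    _ ≤ a + L * (a / (1 - L)) := by gcongr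
    _ = a / (1 - L) := by field_simp [hL1.ne']; ring

theorem dstar_pushfwd_le (hρ : ρ Set.univ ≤ 1) {α₁ α₂ : Euc n → Euc n}
    (h₁ : AEMeasurable α₁ ρ) (h₂ : AEMeasurable α₂ ρ) {c : ℝ} (hc : 0 ≤ c)
    (h : ∀ᵐ x ∂ρ, ‖α₁ x - α₂ x‖ ≤ c) : dstar (pushfwd ρ α₁) (pushfwd ρ α₂) ≤ c := by
  have : IsFiniteMeasure ρ := ⟨hρ.trans_lt ENNReal.one_lt_top⟩
  refine dstar_le hc fun φ hφ hφ1 => ?_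
  have hint : ∀ β : Euc n → Euc n, AEMeasurable β ρ → Integrable (fun x => φ (x, β x)) ρ :=
    fun β hβ => .of_bound (hφ.continuous.comp_aestronglyMeasurable
      (aemeasurable_id.prodMk hβ).aestronglyMeasurable) 1 (.of_forall fun x => hφ1 _)
  rw [integral_pushfwd h₁ hφ.continuous, integral_pushfwd h₂ hφ.continuous,
    ← integral_sub (hint _ h₁) (hint _ h₂)]
  refine integral_le_of_ae_le_of_measure_univ_le_one hρ hc (h.mono fun x hx => ?_)
  calc φ (x, α₁ x) - φ (x, α₂ x) ≤ dist (φ (x, α₁ x)) (φ (x, α₂ x)) :=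
        (le_abs_self _).trans (Real.dist_eq _ _).ge
    _ ≤ dist (x, α₁ x) (x, α₂ x) := hφ.dist_le_mul_of_le le_rfl |>.trans_eq (one_mul _)
    _ = ‖α₁ x - α₂ x‖ := by simp [dist_eq_norm]
    _ ≤ c := hx

end Pushforward

section DensityMeasure

variable {Ω : Set (Euc n)} {m : Euc n → ℝ}

theorem densMeas_univ_le_one (hm0 : ∀ x, 0 ≤ m x) (hm : IntegrableOn m Ω)
    (hm1 : ∫ x in Ω, m x ≤ 1) : densMeas Ω m Set.univ ≤ 1 := by
  rw [densMeas, withDensity_apply _ MeasurableSet.univ, Measure.restrict_univ,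
    ← ofReal_integral_eq_lintegral_ofReal hm (.of_forall hm0)]
  exact ENNReal.ofReal_le_one.mpr hm1

theorem ae_mem_closure_densMeas (hΩ : MeasurableSet Ω) :
    ∀ᵐ x ∂densMeas Ω m, x ∈ closure Ω :=
  (withDensity_absolutelyContinuous _ _).ae_le
    ((ae_restrict_mem hΩ).mono fun _ hx => subset_closure hx)

theorem integral_densMeas {E : Type*} [NormedAddCommGroup E] [NormedSpace ℝ E]
    (hm0 : ∀ x, 0 ≤ m x) (hm : AEMeasurable m (volume.restrict Ω)) (g : Euc n → E) :
    ∫ x, g x ∂densMeas Ω m = ∫ x in Ω, m x • g x := by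
  have hm' : AEMeasurable (fun x => (m x).toNNReal) (volume.restrict Ω) :=
    measurable_real_toNNReal.comp_aemeasurable hm
  calc ∫ x, g x ∂densMeas Ω m = ∫ x in Ω, (m x).toNNReal • g x :=
        integral_withDensity_eq_integral_smul₀ hm' g
    _ = ∫ x in Ω, m x • g x := by
        congr 1 with x
        rw [NNReal.smul_def, Real.coe_toNNReal _ (hm0 x)]

theorem integral_densMeas_sub_le {ψ : Euc n → ℝ} (hψ : AEStronglyMeasurable ψ (volume.restrict Ω))
    (hψ1 : ∀ x, |ψ x| ≤ 1) {m₁ m₂ : Euc n → ℝ} (h₁0 : ∀ x, 0 ≤ m₁ x) (h₂0 : ∀ x, 0 ≤ m₂ x)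
    (h₁ : IntegrableOn m₁ Ω) (h₂ : IntegrableOn m₂ Ω) :
    ∫ x, ψ x ∂densMeas Ω m₁ - ∫ x, ψ x ∂densMeas Ω m₂ ≤ ∫ x in Ω, |m₁ x - m₂ x| := by
  have hint : ∀ m' : Euc n → ℝ, IntegrableOn m' Ω →
      Integrable (fun x => m' x • ψ x) (volume.restrict Ω) := fun m' hm' =>
    hm'.norm.mono' (hm'.aestronglyMeasurable.smul hψ) (.of_forall fun x => by
      rw [norm_smul]
      exact mul_le_of_le_one_right (norm_nonneg _) ((Real.norm_eq_abs _).trans_le (hψ1 x)))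
  rw [integral_densMeas h₁0 h₁.aemeasurable, integral_densMeas h₂0 h₂.aemeasurable,
    ← integral_sub (hint _ h₁) (hint _ h₂)]
  refine integral_mono ((hint _ h₁).sub (hint _ h₂)) (h₁.sub h₂).abs fun x => ?_
  calc m₁ x • ψ x - m₂ x • ψ x = (m₁ x - m₂ x) * ψ x := by simp only [smul_eq_mul]; ring
    _ ≤ |m₁ x - m₂ x| * |ψ x| := by rw [← abs_mul]; exact le_abs_self _
    _ ≤ |m₁ x - m₂ x| := mul_le_of_le_one_right (abs_nonneg _) (hψ1 x)

theorem dstar_pushfwd_densMeas_le {α : Euc n → Euc n} (hα : AEMeasurable α (volume.restrict Ω))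
    {m₁ m₂ : Euc n → ℝ} (h₁0 : ∀ x, 0 ≤ m₁ x) (h₂0 : ∀ x, 0 ≤ m₂ x)
    (h₁ : IntegrableOn m₁ Ω) (h₂ : IntegrableOn m₂ Ω) :
    dstar (pushfwd (densMeas Ω m₁) α) (pushfwd (densMeas Ω m₂) α) ≤
      ∫ x in Ω, |m₁ x - m₂ x| := by
  refine dstar_le (integral_nonneg fun _ => abs_nonneg _) fun φ hφ hφ1 => ?_
  have hac : ∀ m' : Euc n → ℝ, densMeas Ω m' ≪ volume.restrict Ω :=
    fun _ => withDensity_absolutelyContinuous _ _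
  rw [integral_pushfwd (hα.mono_ac (hac m₁)) hφ.continuous,
    integral_pushfwd (hα.mono_ac (hac m₂)) hφ.continuous]
  exact integral_densMeas_sub_le (hφ.continuous.comp_aestronglyMeasurable
    (aemeasurable_id.prodMk hα).aestronglyMeasurable) (fun x => hφ1 _) h₁0 h₂0 h₁ h₂

end DensityMeasure

def feedbackField (D : ℝ → Euc n → Euc n → Measure (Euc n × Euc n) → Euc n) (s lam : ℝ)
    (p : Euc n → Euc n) (μ : Measure (Euc n × Euc n)) : Euc n → Euc n :=
  fun x => -(lam • D s x (p x) μ)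

def ContractionProperty (Ω : Set (Euc n)) (q₀ L₁ : ℝ)
    (D : ℝ → Euc n → Euc n → Measure (Euc n × Euc n) → Euc n) : Prop :=
  ∀ (s : ℝ) (x pp : Euc n) (ρ : Measure (Euc n)),
    ρ Set.univ ≤ 1 → ρ ((closure Ω)ᶜ) = 0 →
    ∀ α₁ α₂ : Euc n → Euc n,
      ContinuousOn α₁ (closure Ω) → ContinuousOn α₂ (closure Ω) →
      (∃ C, ∀ y ∈ closure Ω, ‖α₁ y‖ ≤ C) → (∃ C, ∀ y ∈ closure Ω, ‖α₂ y‖ ≤ C) →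
      ‖D s x pp (pushfwd ρ α₁) - D s x pp (pushfwd ρ α₂)‖ ≤
        L₁ * LqNormV q₀ ρ (fun y => α₁ y - α₂ y)

def GrowthBound (T : ℝ) (Ω : Set (Euc n)) (C₀ q lam₀ q₀ : ℝ)
    (D : ℝ → Euc n → Euc n → Measure (Euc n × Euc n) → Euc n) : Prop :=
  ∀ s ∈ Icc (0:ℝ) T, ∀ x ∈ closure Ω, ∀ (pp : Euc n) (μ : Measure (Euc n × Euc n)),
    μ Set.univ ≤ 1 → ‖D s x pp μ‖ ≤ C₀ * (1 + ‖pp‖ ^ (q - 1)) + lam₀ * LambdaQ q₀ μ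

section FixedPoint

variable {T : ℝ} {Ω : Set (Euc n)} {D : ℝ → Euc n → Euc n → Measure (Euc n × Euc n) → Euc n}

theorem MContV.continuousOn (hD : MContV T Ω D) {R : ℝ} (hR : 0 < R) {s : ℝ}
    (hs : s ∈ Icc 0 T) {p : Euc n → Euc n} (hp : ContinuousOn p (closure Ω))
    {μ : Measure (Euc n × Euc n)} (hμ1 : μ Set.univ ≤ 1) (hμR : μ {z | R < ‖z.2‖} = 0) :
    ContinuousOn (fun x => D s x (p x) μ) (closure Ω) := by
  rw [continuousOn_iff_continuous_domRestrict]
  refine SeqContinuous.continuous fun x a hx => ?_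
  exact hD R hR (fun _ => s) (fun k => x k) (fun k => p (x k)) (fun _ => μ) s a (p a) μ
    (fun _ => hs) hs (fun k => (x k).2) a.2 (fun _ => ⟨hμ1, hμR⟩) hμ1 hμR tendsto_const_nhds
    ((continuous_subtype_val.tendsto a).comp hx) ((hp.domRestrict.tendsto a).comp hx)
    (by simp only [dstar_self hμ1, tendsto_const_nhds])

theorem tendstoUniformlyOn_feedbackField (hD : MContV T Ω D) (hK : IsCompact (closure Ω))
    {R : ℝ} (hR : 0 < R) {sk : ℕ → ℝ} {s : ℝ} (hsk : ∀ k, sk k ∈ Icc 0 T) (hs : s ∈ Icc 0 T)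
    (hss : Tendsto sk atTop (𝓝 s)) {lamk : ℕ → ℝ} {lam : ℝ} (hll : Tendsto lamk atTop (𝓝 lam))
    {pk : ℕ → Euc n → Euc n} {p : Euc n → Euc n}
    (hpp : TendstoUniformlyOn pk p atTop (closure Ω)) (hp : ContinuousOn p (closure Ω))
    {μk : ℕ → Measure (Euc n × Euc n)} {μ : Measure (Euc n × Euc n)}
    (hμk : ∀ k, μk k Set.univ ≤ 1 ∧ μk k {z | R < ‖z.2‖} = 0)
    (hμ1 : μ Set.univ ≤ 1) (hμR : μ {z | R < ‖z.2‖} = 0)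
    (hμμ : Tendsto (fun k => dstar (μk k) μ) atTop (𝓝 0)) :
    TendstoUniformlyOn (fun k => feedbackField D (sk k) (lamk k) (pk k) (μk k))
      (feedbackField D s lam p μ) atTop (closure Ω) := by
  refine tendstoUniformlyOn_of_seq_tendsto hK
    ((hD.continuousOn hR hs hp hμ1 hμR).const_smul lam).neg fun k x a ha hk hx hxa => ?_
  have hpx : Tendsto (fun j => pk (k j) (x j)) atTop (𝓝 (p a)) :=
    (hpp.seq_tendstoUniformlyOn k hk).tendsto_comp (hp a ha)
      (tendsto_nhdsWithin_iff.2 ⟨hxa, .of_forall hx⟩)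
  exact ((hll.comp hk).smul (hD R hR (sk ∘ k) x _ (μk ∘ k) s a (p a) μ (fun j => hsk _) hs hx ha
    (fun j => hμk _) hμ1 hμR (hss.comp hk) hxa hpx (hμμ.comp hk))).neg

theorem norm_feedbackField_le_of_fixedPoint {C₀ q lam₀ q₀ : ℝ} (hC₀ : 0 ≤ C₀) (hq : 1 ≤ q)
    (hlam₀ : lam₀ ∈ Ico 0 1) (hq₀ : 0 < q₀)
    (hgrowth : GrowthBound T Ω C₀ q lam₀ q₀ D)
    {ρ : Measure (Euc n)} (hρ : ρ Set.univ ≤ 1) (hρK : ∀ᵐ x ∂ρ, x ∈ closure Ω)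
    {s lam : ℝ} (hs : s ∈ Icc 0 T) (hlam : lam ∈ Icc (0:ℝ) 1) {p : Euc n → Euc n} {P : ℝ}
    (hP0 : 0 ≤ P) (hP : ∀ x ∈ closure Ω, ‖p x‖ ≤ P) {μ : Measure (Euc n × Euc n)}
    (hfix : μ = pushfwd ρ (feedbackField D s lam p μ)) :
    ∀ x ∈ closure Ω, ‖feedbackField D s lam p μ x‖ ≤ C₀ * (1 + P ^ (q - 1)) / (1 - lam₀) := by
  have hlam₀0 := hlam₀.1
  have hμ1 : μ Set.univ ≤ 1 := by rw [hfix]; exact pushfwd_univ_le.trans hρ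
  have hΛ : LambdaQ q₀ μ ≤ LqNormV q₀ ρ (feedbackField D s lam p μ) := by
    conv_lhs => rw [hfix]
    exact LambdaQ_pushfwd_le hq₀
  refine norm_le_div_of_norm_le_add_LqNormV hρ hρK (by positivity) hlam₀ hq₀ fun x hx => ?_
  calc ‖feedbackField D s lam p μ x‖ = lam * ‖D s x (p x) μ‖ := by
        simp [feedbackField, norm_smul, abs_of_nonneg hlam.1]
    _ ≤ ‖D s x (p x) μ‖ := mul_le_of_le_one_left (norm_nonneg _) hlam.2
    _ ≤ C₀ * (1 + ‖p x‖ ^ (q - 1)) + lam₀ * LambdaQ q₀ μ := hgrowth s hs x hx (p x) μ hμ1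
    _ ≤ C₀ * (1 + P ^ (q - 1)) + lam₀ * LqNormV q₀ ρ (feedbackField D s lam p μ) := by
        have hpP : ‖p x‖ ^ (q - 1) ≤ P ^ (q - 1) :=
          Real.rpow_le_rpow (norm_nonneg _) (hP x hx) (by linarith)
        have := mul_le_mul_of_nonneg_left hpP hC₀
        have := mul_le_mul_of_nonneg_left hΛ hlam₀0
        linarith

theorem exists_fixedPoint_bound (hD : MContV T Ω D) (hK : IsCompact (closure Ω))
    {C₀ q lam₀ q₀ : ℝ} (hC₀ : 0 < C₀) (hq : 1 ≤ q) (hlam₀ : lam₀ ∈ Ico 0 1) (hq₀ : 0 < q₀)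
    (hgrowth : GrowthBound T Ω C₀ q lam₀ q₀ D)
    {ρ : Measure (Euc n)} (hρ : ρ Set.univ ≤ 1) (hρK : ∀ᵐ x ∂ρ, x ∈ closure Ω)
    {s lam : ℝ} (hs : s ∈ Icc 0 T) (hlam : lam ∈ Icc (0:ℝ) 1) {p : Euc n → Euc n}
    (hp : ContinuousOn p (closure Ω)) {μ : Measure (Euc n × Euc n)}
    (hfix : μ = pushfwd ρ (feedbackField D s lam p μ)) :
    ∃ R > 0, μ Set.univ ≤ 1 ∧ μ {z | R < ‖z.2‖} = 0 ∧
      (∀ x ∈ closure Ω, ‖feedbackField D s lam p μ x‖ ≤ R) ∧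
      ContinuousOn (feedbackField D s lam p μ) (closure Ω) := by
  obtain ⟨P, hP⟩ := hK.exists_bound_of_continuousOn hp
  have hbound := norm_feedbackField_le_of_fixedPoint hC₀.le hq hlam₀ hq₀ hgrowth hρ hρK hs hlam
    (le_max_right P 0) (fun x hx => (hP x hx).trans (le_max_left P 0)) hfix
  have hR : 0 < C₀ * (1 + max P 0 ^ (q - 1)) / (1 - lam₀) :=
    div_pos (by positivity) (sub_pos.2 hlam₀.2)
  have hμ1 : μ Set.univ ≤ 1 := by rw [hfix]; exact pushfwd_univ_le.trans hρ
  have hμR : μ {z | C₀ * (1 + max P 0 ^ (q - 1)) / (1 - lam₀) < ‖z.2‖} = 0 := by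
    rw [hfix]; exact pushfwd_norm_snd_gt (hρK.mono hbound)
  exact ⟨_, hR, hμ1, hμR, hbound, ((hD.continuousOn hR hs hp hμ1 hμR).const_smul lam).neg⟩

theorem dstar_fixedPoint_pushfwd_le (hK : IsCompact (closure Ω)) {q₀ L₁ : ℝ}
    (hLip : ContractionProperty Ω q₀ L₁ D)
    (hL₁ : L₁ ∈ Ico 0 1) (hq₀ : 0 < q₀) {ρ : Measure (Euc n)} (hρ1 : ρ Set.univ ≤ 1)
    (hρK : ρ (closure Ω)ᶜ = 0) {s lam : ℝ} (hlam : lam ∈ Icc (0:ℝ) 1) {p : Euc n → Euc n}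
    {μ : Measure (Euc n × Euc n)} (hfix : μ = pushfwd ρ (feedbackField D s lam p μ))
    (hfixc : ContinuousOn (feedbackField D s lam p μ) (closure Ω)) {α : Euc n → Euc n}
    (hαc : ContinuousOn α (closure Ω)) {δ : ℝ} (hδ : 0 ≤ δ)
    (hαδ : ∀ x ∈ closure Ω, ‖feedbackField D s lam p (pushfwd ρ α) x - α x‖ ≤ δ) :
    dstar μ (pushfwd ρ α) ≤ δ / (1 - L₁) := by
  set β := feedbackField D s lam p μ
  have hae : ∀ᵐ x ∂ρ, x ∈ closure Ω := ae_iff.2 hρK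
  have haem : ∀ {γ : Euc n → Euc n}, ContinuousOn γ (closure Ω) → AEMeasurable γ ρ :=
    fun hγ => by
      simpa [Measure.restrict_eq_self_of_ae_mem hae] using
        hγ.aemeasurable (μ := ρ) isClosed_closure.measurableSet
  have hpt : ∀ x ∈ closure Ω, ‖β x - α x‖ ≤ δ + L₁ * LqNormV q₀ ρ (fun y => β y - α y) := by
    intro x hx
    have hcontr := hLip s x (p x) ρ hρ1 hρK β α hfixc hαc
      (hK.exists_bound_of_continuousOn hfixc) (hK.exists_bound_of_continuousOn hαc)
    rw [← hfix] at hcontr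
    have hstep : ‖β x - feedbackField D s lam p (pushfwd ρ α) x‖ ≤
        L₁ * LqNormV q₀ ρ (fun y => β y - α y) :=
      calc ‖β x - feedbackField D s lam p (pushfwd ρ α) x‖
          = ‖lam • (D s x (p x) (pushfwd ρ α) - D s x (p x) μ)‖ := by
            simp only [β, feedbackField, smul_sub]
            congr 1
            abel
        _ = lam * ‖D s x (p x) μ - D s x (p x) (pushfwd ρ α)‖ := by
            rw [norm_smul, Real.norm_of_nonneg hlam.1, norm_sub_rev]
        _ ≤ ‖D s x (p x) μ - D s x (p x) (pushfwd ρ α)‖ :=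
            mul_le_of_le_one_left (norm_nonneg _) hlam.2
        _ ≤ _ := hcontr
    linarith [norm_sub_le_norm_sub_add_norm_sub (β x) (feedbackField D s lam p (pushfwd ρ α) x)
      (α x), hαδ x hx]
  have hbound := norm_le_div_of_norm_le_add_LqNormV hρ1 hae hδ hL₁ hq₀ hpt
  rw [hfix]
  exact dstar_pushfwd_le hρ1 (haem hfixc) (haem hαc) (div_nonneg hδ (sub_pos.2 hL₁.2).le)
    (hae.mono hbound)

theorem tendsto_dstar_fixedPoint_pushfwd (hK : IsCompact (closure Ω)) {q₀ L₁ : ℝ}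
    (hLip : ContractionProperty Ω q₀ L₁ D)
    (hL₁ : L₁ ∈ Ico 0 1) (hq₀ : 0 < q₀) {ρ : ℕ → Measure (Euc n)}
    (hρ1 : ∀ k, ρ k Set.univ ≤ 1) (hρK : ∀ k, ρ k (closure Ω)ᶜ = 0) {s lam : ℕ → ℝ}
    (hlam : ∀ k, lam k ∈ Icc (0:ℝ) 1) {p : ℕ → Euc n → Euc n}
    {μ : ℕ → Measure (Euc n × Euc n)}
    (hfix : ∀ k, μ k = pushfwd (ρ k) (feedbackField D (s k) (lam k) (p k) (μ k)))
    (hfixc : ∀ k, ContinuousOn (feedbackField D (s k) (lam k) (p k) (μ k)) (closure Ω))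
    {α : Euc n → Euc n} (hαc : ContinuousOn α (closure Ω))
    (hunif : TendstoUniformlyOn (fun k => feedbackField D (s k) (lam k) (p k) (pushfwd (ρ k) α))
      α atTop (closure Ω)) :
    Tendsto (fun k => dstar (μ k) (pushfwd (ρ k) α)) atTop (𝓝 0) := by
  have hL : 0 < 1 - L₁ := sub_pos.2 hL₁.2
  have hμ1 : ∀ k, μ k Set.univ ≤ 1 := fun k => by
    rw [hfix k]; exact pushfwd_univ_le.trans (hρ1 k)
  refine tendsto_order.2 ⟨fun a ha => .of_forall fun k =>
    ha.trans_le (dstar_nonneg (hμ1 k) (pushfwd_univ_le.trans (hρ1 k))), fun ε hε => ?_⟩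
  filter_upwards [Metric.tendstoUniformlyOn_iff.1 hunif (ε * (1 - L₁) / 2) (by positivity)]
    with k hk
  calc dstar (μ k) (pushfwd (ρ k) α) ≤ ε * (1 - L₁) / 2 / (1 - L₁) :=
        dstar_fixedPoint_pushfwd_le hK hLip hL₁ hq₀ (hρ1 k) (hρK k) (hlam k) (hfix k) (hfixc k)
          hαc (by positivity) fun x hx => by rw [← dist_eq_norm, dist_comm]; exact (hk x hx).le
    _ < ε := by field_simp; linarith

end FixedPoint

end MFG

theorem stmt_2_general
    {n : ℕ} (T : ℝ)
    (Ω : Set (Euc n)) (hΩo : IsOpen Ω) (hΩb : Bornology.IsBounded Ω)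
    (DpH : ℝ → Euc n → Euc n → Measure (Euc n × Euc n) → Euc n)
    (C₀ q lam₀ q₀ L₁ : ℝ) (hC₀ : 0 < C₀) (hq : 1 < q) (hlam₀ : lam₀ ∈ Ioo (0:ℝ) 1)
    (hq₀ : 1 ≤ q₀) (hL₁ : L₁ ∈ Ioo (0:ℝ) 1)
    -- continuity of `D_pH` on `[0,T]×cl(Ω)×ℝⁿ×𝔐_{∞,R}` (with `d*` on measures)
    (hDcont : MContV T Ω DpH)
    -- (i) contraction property
    (hLip : ∀ (s : ℝ) (x pp : Euc n) (ρ : Measure (Euc n)),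
      ρ Set.univ ≤ 1 → ρ ((closure Ω)ᶜ) = 0 →
      ∀ α₁ α₂ : Euc n → Euc n,
        ContinuousOn α₁ (closure Ω) → ContinuousOn α₂ (closure Ω) →
        (∃ C, ∀ y ∈ closure Ω, ‖α₁ y‖ ≤ C) → (∃ C, ∀ y ∈ closure Ω, ‖α₂ y‖ ≤ C) →
        ‖DpH s x pp (pushfwd ρ α₁) - DpH s x pp (pushfwd ρ α₂)‖ ≤
          L₁ * LqNormV q₀ ρ (fun y => α₁ y - α₂ y))
    -- (ii) growth bound
    (hgrowth : ∀ s ∈ Icc (0:ℝ) T, ∀ x ∈ closure Ω, ∀ (pp : Euc n)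
      (μ' : Measure (Euc n × Euc n)), μ' Set.univ ≤ 1 →
      ‖DpH s x pp μ'‖ ≤ C₀ * (1 + ‖pp‖ ^ (q - 1)) + lam₀ * LambdaQ q₀ μ')
    -- the converging sequence of data
    (tk lamk : ℕ → ℝ) (pk : ℕ → Euc n → Euc n) (mk : ℕ → Euc n → ℝ)
    (t lam : ℝ) (p : Euc n → Euc n) (m : Euc n → ℝ)
    (htk : ∀ k, tk k ∈ Icc 0 T) (ht : t ∈ Icc 0 T)
    (hlamk : ∀ k, lamk k ∈ Icc (0:ℝ) 1) (hlam : lam ∈ Icc (0:ℝ) 1)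
    (hpkc : ∀ k, ContinuousOn (pk k) (closure Ω)) (hpc : ContinuousOn p (closure Ω))
    (htt : Tendsto tk atTop (𝓝 t)) (hll : Tendsto lamk atTop (𝓝 lam))
    (hpp : TendstoUniformlyOn pk p atTop (closure Ω))
    (hmk0 : ∀ k x, 0 ≤ mk k x) (hm0 : ∀ x, 0 ≤ m x)
    (hmkint : ∀ k, IntegrableOn (mk k) Ω) (hmint : IntegrableOn m Ω)
    (hmk1 : ∀ k, (∫ x in Ω, mk k x) ≤ 1)
    (hmconv : Tendsto (fun k => ∫ x in Ω, |mk k x - m x|) atTop (𝓝 0))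
    -- the fixed points associated to the data
    (μk : ℕ → Measure (Euc n × Euc n)) (μ : Measure (Euc n × Euc n))
    (hμk : ∀ k, μk k = pushfwd (densMeas Ω (mk k))
        (fun x => -(lamk k • DpH (tk k) x (pk k x) (μk k))))
    (hμ : μ = pushfwd (densMeas Ω m) (fun x => -(lam • DpH t x (p x) μ))) :
    Tendsto (fun k => dstar (μk k) μ) atTop (𝓝 0) := by
  have hK : IsCompact (closure Ω) := hΩb.isCompact_closure
  have hνK : ∀ m' : Euc n → ℝ, ∀ᵐ x ∂densMeas Ω m', x ∈ closure Ω :=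
    fun _ => ae_mem_closure_densMeas hΩo.measurableSet
  have hνk1 : ∀ k, densMeas Ω (mk k) Set.univ ≤ 1 :=
    fun k => densMeas_univ_le_one (hmk0 k) (hmkint k) (hmk1 k)
  have hν1 : densMeas Ω m Set.univ ≤ 1 := densMeas_univ_le_one hm0 hmint
    (integral_le_of_tendsto_integral_abs_sub hmkint hmint hmk1 hmconv)
  have hlam₀' : lam₀ ∈ Ico 0 1 := ⟨hlam₀.1.le, hlam₀.2⟩
  have hq₀' : 0 < q₀ := by linarith
  obtain ⟨R, hR, hμ1, hμR, hαR, hαc⟩ := exists_fixedPoint_bound hDcont hK hC₀ hq.le hlam₀' hq₀'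
    hgrowth hν1 (hνK m) ht hlam hpc hμ
  choose _ _ hμk1 _ _ hαkc using fun k => exists_fixedPoint_bound hDcont hK hC₀ hq.le hlam₀'
    hq₀' hgrowth (hνk1 k) (hνK _) (htk k) (hlamk k) (hpkc k) (hμk k)
  set α := feedbackField DpH t lam p μ
  set χ : ℕ → Measure (Euc n × Euc n) := fun k => pushfwd (densMeas Ω (mk k)) α
  have hχ1 : ∀ k, χ k Set.univ ≤ 1 := fun k => pushfwd_univ_le.trans (hνk1 k)
  have hχμ : Tendsto (fun k => dstar (χ k) μ) atTop (𝓝 0) := by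
    refine squeeze_zero (fun k => dstar_nonneg (hχ1 k) hμ1) (fun k => ?_) hmconv
    rw [hμ]
    exact dstar_pushfwd_densMeas_le ((hαc.mono subset_closure).aemeasurable hΩo.measurableSet)
      (hmk0 k) hm0 (hmkint k) hmint
  have hunif := tendstoUniformlyOn_feedbackField hDcont hK hR htk ht htt hll hpp hpc
    (fun k => ⟨hχ1 k, pushfwd_norm_snd_gt ((hνK _).mono hαR)⟩) hμ1 hμR hχμ
  have hμkχ := tendsto_dstar_fixedPoint_pushfwd hK hLip ⟨hL₁.1.le, hL₁.2⟩ hq₀' hνk1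
    (fun k => ae_iff.1 (hνK _)) hlamk hμk hαkc hαc hunif
  exact squeeze_zero (fun k => dstar_nonneg (hμk1 k) hμ1)
    (fun k => dstar_triangle (hμk1 k) hμ1 (hχ1 k)) (by simpa using hμkχ.add hχμ)

/-- stability of the fixed-point measures `μ^k` under convergence of
the data `(t_k, λ_k, p_k, m_k) → (t, λ, p, m)`. -/
theorem stmt_2
    {n : ℕ} (hn : 1 ≤ n) (T : ℝ) (hT : 0 < T)
    (Ω : Set (Euc n)) (hΩo : IsOpen Ω) (hΩb : Bornology.IsBounded Ω) (hΩne : Ω.Nonempty)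
    (DpH : ℝ → Euc n → Euc n → Measure (Euc n × Euc n) → Euc n)
    (C₀ q lam₀ q₀ L₁ : ℝ) (hC₀ : 0 < C₀) (hq : 1 < q) (hlam₀ : lam₀ ∈ Ioo (0:ℝ) 1)
    (hq₀ : 1 ≤ q₀) (hL₁ : L₁ ∈ Ioo (0:ℝ) 1)
    -- continuity of `D_pH` on `[0,T]×cl(Ω)×ℝⁿ×𝔐_{∞,R}` (with `d*` on measures)
    (hDcont : MContV T Ω DpH)
    -- (i) contraction property
    (hLip : ∀ (s : ℝ) (x pp : Euc n) (ρ : Measure (Euc n)),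
      ρ Set.univ ≤ 1 → ρ ((closure Ω)ᶜ) = 0 →
      ∀ α₁ α₂ : Euc n → Euc n,
        ContinuousOn α₁ (closure Ω) → ContinuousOn α₂ (closure Ω) →
        (∃ C, ∀ y ∈ closure Ω, ‖α₁ y‖ ≤ C) → (∃ C, ∀ y ∈ closure Ω, ‖α₂ y‖ ≤ C) →
        ‖DpH s x pp (pushfwd ρ α₁) - DpH s x pp (pushfwd ρ α₂)‖ ≤
          L₁ * LqNormV q₀ ρ (fun y => α₁ y - α₂ y))
    -- (ii) growth bound
    (hgrowth : ∀ s ∈ Icc (0:ℝ) T, ∀ x ∈ closure Ω, ∀ (pp : Euc n)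
      (μ' : Measure (Euc n × Euc n)), μ' Set.univ ≤ 1 →
      ‖DpH s x pp μ'‖ ≤ C₀ * (1 + ‖pp‖ ^ (q - 1)) + lam₀ * LambdaQ q₀ μ')
    -- the converging sequence of data
    (tk lamk : ℕ → ℝ) (pk : ℕ → Euc n → Euc n) (mk : ℕ → Euc n → ℝ)
    (t lam : ℝ) (p : Euc n → Euc n) (m : Euc n → ℝ)
    (htk : ∀ k, tk k ∈ Icc 0 T) (ht : t ∈ Icc 0 T)
    (hlamk : ∀ k, lamk k ∈ Icc (0:ℝ) 1) (hlam : lam ∈ Icc (0:ℝ) 1)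
    (hpkc : ∀ k, ContinuousOn (pk k) (closure Ω)) (hpc : ContinuousOn p (closure Ω))
    (htt : Tendsto tk atTop (𝓝 t)) (hll : Tendsto lamk atTop (𝓝 lam))
    (hpp : TendstoUniformlyOn pk p atTop (closure Ω))
    (hmk0 : ∀ k x, 0 ≤ mk k x) (hm0 : ∀ x, 0 ≤ m x)
    (hmkint : ∀ k, IntegrableOn (mk k) Ω) (hmint : IntegrableOn m Ω)
    (hmk1 : ∀ k, (∫ x in Ω, mk k x) ≤ 1)
    (hmconv : Tendsto (fun k => ∫ x in Ω, |mk k x - m x|) atTop (𝓝 0))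
    -- the fixed points associated to the data
    (μk : ℕ → Measure (Euc n × Euc n)) (μ : Measure (Euc n × Euc n))
    (hμk : ∀ k, μk k = pushfwd (densMeas Ω (mk k))
        (fun x => -(lamk k • DpH (tk k) x (pk k x) (μk k))))
    (hμ : μ = pushfwd (densMeas Ω m) (fun x => -(lam • DpH t x (p x) μ))) :
    Tendsto (fun k => dstar (μk k) μ) atTop (𝓝 0) :=
  stmt_2_general T Ω hΩo hΩb DpH C₀ q lam₀ q₀ L₁ hC₀ hq hlam₀ hq₀ hL₁ hDcont hLip hgrowth tk lamk pk
    mk t lam p m htk ht hlamk hlam hpkc hpc htt hll hpp hmk0 hm0 hmkint hmint hmk1 hmconv μk μ hμk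
    hμ
end
end

section
/- Let f : ℝⁿ → ℝ be differentiable and superlinearly coercive, i.e. f(α)/|α| → +∞ as |α| → ∞. Then f is strictly convex if and only if for every p ∈ ℝⁿ the supremum sup_{α ∈ ℝⁿ} (p·α − f(α)) is attained at exactly one point α ∈ ℝⁿ. -/
/-!
`α` maximizes `β ↦ ⟪p, β⟫ - f β` exactly when the affine function `β ↦ f α + ⟪p, β - α⟫` supports
`f` at `α`. Superlinear growth makes such maximizers exist for every `p` and stay in a compact set
while `p` stays bounded; strict convexity makes them unique. Conversely, if they are unique, the
maximizer map `A` is continuous (compactness plus closedness of its graph), so the Legendre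
transform `p ↦ ⟪p, A p⟫ - f (A p)` is continuous with one-sided directional derivatives controlled
by `A`. Minimizing it against `⟪·, α₀⟫` gives a `p₀` whose first-order condition reads
`A p₀ = α₀`: every point carries a supporting hyperplane, touching `f` only there by uniqueness,
and this is strict convexity.
-/

open Set MeasureTheory Filter
open scoped RealInnerProductSpace ENNReal Topology

noncomputable section

open MFG

section LegendreMaximizer

variable {E : Type*} [NormedAddCommGroup E] {f : E → ℝ}

lemma tendsto_sub_mul_norm_cocompact [ProperSpace E]
    (hcoer : Tendsto (fun α => f α / ‖α‖) (cocompact E) atTop) (c : ℝ) :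
    Tendsto (fun β => f β - c * ‖β‖) (cocompact E) atTop := by
  refine (tendsto_norm_cocompact_atTop.atTop_mul_atTop₀
    (tendsto_atTop_add_const_right _ (-c) hcoer)).congr' ?_
  filter_upwards [tendsto_norm_cocompact_atTop.eventually_ne_atTop 0] with β hβ
  field_simp
  ring

variable [InnerProductSpace ℝ E]

def IsLegendreMaximizer (f : E → ℝ) (p α : E) : Prop :=
  ∀ β, ⟪p, β⟫ - f β ≤ ⟪p, α⟫ - f α

lemma IsLegendreMaximizer.of_tendsto {ι : Type*} {l : Filter ι} [l.NeBot] (hf : Continuous f)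
    {p α : E} {pk αk : ι → E} (hp : Tendsto pk l (𝓝 p)) (hα : Tendsto αk l (𝓝 α))
    (hmax : ∀ k, IsLegendreMaximizer f (pk k) (αk k)) : IsLegendreMaximizer f p α :=
  fun β => le_of_tendsto_of_tendsto' ((hp.inner tendsto_const_nhds).sub tendsto_const_nhds)
    ((hp.inner hα).sub ((hf.tendsto α).comp hα)) fun k => hmax k β

lemma StrictConvexOn.eq_of_isLegendreMaximizer (hf : StrictConvexOn ℝ univ f) {p α α' : E}
    (hα : IsLegendreMaximizer f p α) (hα' : IsLegendreMaximizer f p α') : α = α' :=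
  (((innerₛₗ ℝ p).concaveOn convex_univ).sub_strictConvexOn hf).eq_of_isMaxOn
    (isMaxOn_univ_iff.mpr hα) (isMaxOn_univ_iff.mpr hα') (mem_univ α) (mem_univ α')

lemma strictConvexOn_univ_of_forall_exists_isLegendreMaximizer
    (hsupp : ∀ α, ∃ p, IsLegendreMaximizer f p α)
    (huniq : ∀ p α α', IsLegendreMaximizer f p α → IsLegendreMaximizer f p α' → α = α') :
    StrictConvexOn ℝ univ f := by
  refine ⟨convex_univ, fun x _ y _ hxy a b ha hb hab => ?_⟩
  set z := a • x + b • y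
  obtain ⟨p, hp⟩ := hsupp z
  have hstrict : ⟪p, x⟫ - f x < ⟪p, z⟫ - f z ∨ ⟪p, y⟫ - f y < ⟪p, z⟫ - f z := by
    by_contra! h
    exact hxy (huniq p x y (fun β => (hp β).trans h.1) (fun β => (hp β).trans h.2))
  have hz : ⟪p, z⟫ = a * ⟪p, x⟫ + b * ⟪p, y⟫ := by
    simp only [z, inner_add_right, real_inner_smul_right]
  have hcomb : a * (⟪p, x⟫ - f x) + b * (⟪p, y⟫ - f y) < (a + b) * (⟪p, z⟫ - f z) := by
    rw [add_mul]
    rcases hstrict with h | h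
    · exact add_lt_add_of_lt_of_le (mul_lt_mul_of_pos_left h ha)
        (mul_le_mul_of_nonneg_left (hp y) hb.le)
    · exact add_lt_add_of_le_of_lt (mul_le_mul_of_nonneg_left (hp x) ha.le)
        (mul_lt_mul_of_pos_left h hb)
  rw [hab, one_mul, hz] at hcomb
  rw [smul_eq_mul, smul_eq_mul]
  linarith

variable [ProperSpace E]

lemma tendsto_sub_inner_cocompact
    (hcoer : Tendsto (fun α => f α / ‖α‖) (cocompact E) atTop) (p : E) :
    Tendsto (fun β => f β - ⟪p, β⟫) (cocompact E) atTop :=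
  tendsto_atTop_mono (fun β => by linarith [real_inner_le_norm p β])
    (tendsto_sub_mul_norm_cocompact hcoer ‖p‖)

lemma exists_isLegendreMaximizer (hf : Continuous f)
    (hcoer : Tendsto (fun α => f α / ‖α‖) (cocompact E) atTop) (p : E) :
    ∃ α, IsLegendreMaximizer f p α := by
  obtain ⟨α, hα⟩ := (show Continuous fun β => f β - ⟪p, β⟫ by fun_prop).exists_forall_le
    (tendsto_sub_inner_cocompact hcoer p)
  exact ⟨α, fun β => by linarith [hα β]⟩

lemma StrictConvexOn.existsUnique_isLegendreMaximizer (hsc : StrictConvexOn ℝ univ f)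
    (hf : Continuous f)
    (hcoer : Tendsto (fun α => f α / ‖α‖) (cocompact E) atTop) (p : E) :
    ∃! α, IsLegendreMaximizer f p α := by
  obtain ⟨α, hα⟩ := exists_isLegendreMaximizer hf hcoer p
  exact ⟨α, hα, fun α' hα' => hsc.eq_of_isLegendreMaximizer hα' hα⟩

lemma exists_isCompact_forall_isLegendreMaximizer_mem
    (hcoer : Tendsto (fun α => f α / ‖α‖) (cocompact E) atTop) (P : ℝ) :
    ∃ K, IsCompact K ∧ ∀ p α, ‖p‖ ≤ P → IsLegendreMaximizer f p α → α ∈ K := by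
  obtain ⟨K, hK, hKc⟩ := mem_cocompact.mp
    ((tendsto_sub_mul_norm_cocompact hcoer P).eventually_gt_atTop (f 0))
  refine ⟨K, hK, fun p α hp hα => by_contra fun hαK => ?_⟩
  have hgrowth : f 0 < f α - P * ‖α‖ := hKc hαK
  have hmax := hα 0
  rw [inner_zero_right] at hmax
  nlinarith [real_inner_le_norm p α, mul_le_mul_of_nonneg_right hp (norm_nonneg α)]

lemma continuous_of_isLegendreMaximizer (hf : Continuous f)
    (hcoer : Tendsto (fun α => f α / ‖α‖) (cocompact E) atTop) {A : E → E}
    (hA : ∀ p, IsLegendreMaximizer f p (A p))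
    (hAu : ∀ p α, IsLegendreMaximizer f p α → α = A p) : Continuous A := by
  refine continuous_iff_seqContinuous.mpr fun pk p hpk => ?_
  obtain ⟨P, hP⟩ := hpk.norm.bddAbove_range
  obtain ⟨K, hK, hAK⟩ := exists_isCompact_forall_isLegendreMaximizer_mem hcoer P
  refine tendsto_of_subseq_tendsto fun ns hns => ?_
  obtain ⟨a, -, φ, hφ, hlim⟩ :=
    hK.tendsto_subseq fun k => hAK _ _ (hP (mem_range_self (ns k))) (hA (pk (ns k)))
  have hpφ : Tendsto (fun k => pk (ns (φ k))) atTop (𝓝 p) :=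
    hpk.comp (hns.comp hφ.tendsto_atTop)
  exact ⟨φ, hAu p a (IsLegendreMaximizer.of_tendsto hf hpφ hlim fun k => hA _) ▸ hlim⟩

lemma tendsto_sub_inner_cocompact_of_le (hf : Continuous f) {S : E → ℝ}
    (hS : ∀ p β, ⟪p, β⟫ - f β ≤ S p) (α₀ : E) :
    Tendsto (fun p => S p - ⟪p, α₀⟫) (cocompact E) atTop := by
  obtain ⟨M, hM⟩ := (isCompact_sphere α₀ 1).bddAbove_image hf.continuousOn
  refine tendsto_atTop_mono' _ ?_
    (tendsto_atTop_add_const_right _ (-M) tendsto_norm_cocompact_atTop)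
  filter_upwards [tendsto_norm_cocompact_atTop.eventually_ne_atTop 0] with p hp
  have hsphere : f (α₀ + ‖p‖⁻¹ • p) ≤ M :=
    hM (mem_image_of_mem f (by simp [norm_smul, hp]))
  have hinner : ⟪p, α₀ + ‖p‖⁻¹ • p⟫ = ⟪p, α₀⟫ + ‖p‖ := by
    rw [inner_add_right, real_inner_smul_right, real_inner_self_eq_norm_sq]
    field_simp
  linarith [hS p (α₀ + ‖p‖⁻¹ • p)]

lemma surjective_of_isLegendreMaximizer (hf : Continuous f) {A : E → E} (hAc : Continuous A)
    (hA : ∀ p, IsLegendreMaximizer f p (A p)) : Function.Surjective A := by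
  intro α₀
  obtain ⟨p₀, hp₀⟩ :=
    (show Continuous fun p => (⟪p, A p⟫ - f (A p)) - ⟪p, α₀⟫ by fun_prop).exists_forall_le
      (tendsto_sub_inner_cocompact_of_le hf hA α₀)
  have hdir : ∀ u, ⟪u, α₀⟫ ≤ ⟪u, A p₀⟫ := by
    intro u
    have hline : Tendsto (fun t : ℝ => p₀ + t • u) (𝓝[>] 0) (𝓝 p₀) :=
      ((show Continuous fun t : ℝ => p₀ + t • u by fun_prop).tendsto' 0 p₀ (by simp)).mono_left
        nhdsWithin_le_nhds
    refine ge_of_tendsto (tendsto_const_nhds.inner ((hAc.tendsto p₀).comp hline)) ?_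
    filter_upwards [self_mem_nhdsWithin] with t (ht : 0 < t)
    change ⟪u, α₀⟫ ≤ ⟪u, A (p₀ + t • u)⟫
    have hmin := hp₀ (p₀ + t • u)
    have hmax := hA p₀ (A (p₀ + t • u))
    simp only [inner_add_left, real_inner_smul_left] at hmin
    exact le_of_mul_le_mul_left (by linarith) ht
  exact ⟨p₀, ext_inner_left ℝ fun u => le_antisymm (by simpa using hdir (-u)) (hdir u)⟩

lemma strictConvexOn_of_existsUnique_isLegendreMaximizer (hf : Continuous f)
    (hcoer : Tendsto (fun α => f α / ‖α‖) (cocompact E) atTop)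
    (hU : ∀ p, ∃! α, IsLegendreMaximizer f p α) : StrictConvexOn ℝ univ f := by
  choose A hA hAu using hU
  have hsurj := surjective_of_isLegendreMaximizer hf
    (continuous_of_isLegendreMaximizer hf hcoer hA hAu) hA
  refine strictConvexOn_univ_of_forall_exists_isLegendreMaximizer (fun α => ?_)
    fun p α α' hα hα' => (hAu p α hα).trans (hAu p α' hα').symm
  obtain ⟨p, rfl⟩ := hsurj α
  exact ⟨p, hA p⟩

end LegendreMaximizer

theorem stmt_15_general
    {n : ℕ} (f : Euc n → ℝ)
    (hdiff : Differentiable ℝ f)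
    (hcoer : Tendsto (fun α : Euc n => f α / ‖α‖) (cocompact (Euc n)) atTop) :
    StrictConvexOn ℝ univ f ↔
      ∀ p : Euc n, ∃! α : Euc n, ∀ β : Euc n, ⟪p, β⟫ - f β ≤ ⟪p, α⟫ - f α :=
  ⟨fun hsc => hsc.existsUnique_isLegendreMaximizer hdiff.continuous hcoer,
    strictConvexOn_of_existsUnique_isLegendreMaximizer hdiff.continuous hcoer⟩

/-- for a differentiable, superlinearly coercive `f : ℝⁿ → ℝ`,
strict convexity is equivalent to uniqueness of the maximizer in the Legendre
transform `sup_α (p·α − f(α))` for every `p`. -/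
theorem stmt_15
    {n : ℕ} (hn : 1 ≤ n) (f : Euc n → ℝ)
    (hdiff : Differentiable ℝ f)
    (hcoer : Tendsto (fun α : Euc n => f α / ‖α‖) (cocompact (Euc n)) atTop) :
    StrictConvexOn ℝ univ f ↔
      ∀ p : Euc n, ∃! α : Euc n, ∀ β : Euc n, ⟪p, β⟫ - f β ≤ ⟪p, α⟫ - f α :=
  stmt_15_general f hdiff hcoer
end
end
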